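/- arXiv:1701.08231 — 7 statements merged into one kernel-verified Lean document; each statement's English description precedes it below -/
import Mathlib

section
/- For every integer k, the complex number ω̃(k) is real and strictly positive; that is, Im(ω̃(k)) = 0 and Re(ω̃(k)) > 0. In particular ω̃(0) > 0. -/

private lemma gammaC_ne (a : ℤ) (c : ℂ) (h : ∀ m : ℤ, c ≠ (m : ℂ)) :
    Complex.Gamma (((a : ℂ) + c) / 2) ≠ 0 := by
  apply Complex.Gamma_ne_zero
  intro n hn
  apply h (-a - 2 * n)
  have hc : c = -(a : ℂ) - 2 * (n : ℂ) := by linear_combination 2 * hn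
  rw [hc]; push_cast; ring

private lemma argC_ne (a : ℤ) (c : ℂ) (h : ∀ m : ℤ, c ≠ (m : ℂ)) :
    ((a : ℂ) + c) / 2 ≠ 0 := by
  intro hn
  apply h (-a)
  have hc : c = -(a : ℂ) := by
    have h2 : ((a : ℂ) + c) / 2 = 0 := hn
    linear_combination 2 * h2
  rw [hc]; push_cast; ring


private noncomputable def gfun (r sr : ℝ) (k : ℤ) : ℝ :=
  r⁻¹ * ((k:ℝ) + sr) * Real.Gamma (((k:ℝ) + sr)/2) * Real.Gamma (((k:ℝ) + 1 - sr)/2) /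
    (Real.Gamma (((k:ℝ) - sr)/2) * Real.Gamma (((k:ℝ) + 1 + sr)/2))

private lemma gfun_rec (r sr : ℝ) (hr : r ≠ 0) (hsr : ∀ m : ℤ, sr ≠ (m : ℝ)) (k : ℤ) :
    (((k:ℝ) - sr) * ((k:ℝ) + 1 + sr)) * gfun r sr (k + 2) =
      (((k:ℝ) + 2 + sr) * ((k:ℝ) + 1 - sr)) * gfun r sr k := by
  have e1 : ((k:ℝ) + sr)/2 ≠ 0 := by
    intro h; exact hsr (-k) (by push_cast; linarith)
  have e2 : ((k:ℝ) + 1 - sr)/2 ≠ 0 := by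
    intro h; exact hsr (k+1) (by push_cast; linarith)
  have e3 : ((k:ℝ) - sr)/2 ≠ 0 := by
    intro h; exact hsr k (by linarith)
  have e4 : ((k:ℝ) + 1 + sr)/2 ≠ 0 := by
    intro h; exact hsr (-k-1) (by push_cast; linarith)
  have hu : (k:ℝ) - sr ≠ 0 := fun h => e3 (by rw [div_eq_zero_iff]; left; exact h)
  have hv : (k:ℝ) + 1 + sr ≠ 0 := fun h => e4 (by rw [div_eq_zero_iff]; left; exact h)
  have g1 : Real.Gamma (((k:ℝ) + sr)/2) ≠ 0 := by
    apply Real.Gamma_ne_zero; intro n hn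
    exact hsr (-k - 2*n) (by push_cast; linarith)
  have g2 : Real.Gamma (((k:ℝ) + 1 - sr)/2) ≠ 0 := by
    apply Real.Gamma_ne_zero; intro n hn
    exact hsr (k + 1 + 2*n) (by push_cast; linarith)
  have g3 : Real.Gamma (((k:ℝ) - sr)/2) ≠ 0 := by
    apply Real.Gamma_ne_zero; intro n hn
    exact hsr (k + 2*n) (by push_cast; linarith)
  have g4 : Real.Gamma (((k:ℝ) + 1 + sr)/2) ≠ 0 := by
    apply Real.Gamma_ne_zero; intro n hn
    exact hsr (-k - 1 - 2*n) (by push_cast; linarith)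
  have G1 : Real.Gamma (((k:ℝ) + 2 + sr)/2) = (((k:ℝ)+sr)/2) * Real.Gamma (((k:ℝ)+sr)/2) := by
    rw [show ((k:ℝ)+2+sr)/2 = ((k:ℝ)+sr)/2 + 1 by ring, Real.Gamma_add_one e1]
  have G2 : Real.Gamma (((k:ℝ) + 3 - sr)/2) = (((k:ℝ)+1-sr)/2) * Real.Gamma (((k:ℝ)+1-sr)/2) := by
    rw [show ((k:ℝ)+3-sr)/2 = ((k:ℝ)+1-sr)/2 + 1 by ring, Real.Gamma_add_one e2]
  have G3 : Real.Gamma (((k:ℝ) + 2 - sr)/2) = (((k:ℝ)-sr)/2) * Real.Gamma (((k:ℝ)-sr)/2) := by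
    rw [show ((k:ℝ)+2-sr)/2 = ((k:ℝ)-sr)/2 + 1 by ring, Real.Gamma_add_one e3]
  have G4 : Real.Gamma (((k:ℝ) + 3 + sr)/2) = (((k:ℝ)+1+sr)/2) * Real.Gamma (((k:ℝ)+1+sr)/2) := by
    rw [show ((k:ℝ)+3+sr)/2 = ((k:ℝ)+1+sr)/2 + 1 by ring, Real.Gamma_add_one e4]
  unfold gfun
  push_cast
  rw [show ((k:ℝ)+2+1-sr)/2 = ((k:ℝ)+3-sr)/2 by ring,
      show ((k:ℝ)+2+1+sr)/2 = ((k:ℝ)+3+sr)/2 by ring,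
      G1, G2, G3, G4]
  field_simp

private lemma coeff_pos (sr : ℝ) (h1 : -(1/2) < sr) (h2 : sr < 0) (j : ℤ) :
    0 < ((j:ℝ) - sr) * ((j:ℝ) + 1 + sr) := by
  have hjj : (0:ℝ) ≤ (j:ℝ)^2 + (j:ℝ) := by
    have : (0:ℤ) ≤ j^2 + j := by nlinarith [sq_nonneg j, sq_nonneg (j+1)]
    exact_mod_cast this
  nlinarith [mul_pos (neg_pos.mpr h2) (show (0:ℝ) < 1 + sr by linarith)]

private lemma gfun_pos (r sr : ℝ) (hr : 0 < r) (h1 : -(1/2) < sr) (h2 : sr < 0) (k : ℤ) :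
    0 < gfun r sr k := by
  have hsr : ∀ m : ℤ, sr ≠ (m : ℝ) := by
    intro m hm
    rw [hm] at h1 h2
    rcases le_or_gt m (-1) with h | h
    · have : (m:ℝ) ≤ -1 := by exact_mod_cast h
      linarith
    · have h0 : (0:ℤ) ≤ m := by omega
      have : (0:ℝ) ≤ (m:ℝ) := by exact_mod_cast h0
      linarith
  have step : ∀ j : ℤ, (0 < gfun r sr j ↔ 0 < gfun r sr (j + 2)) := by
    intro j
    have hrec := gfun_rec r sr (ne_of_gt hr) hsr j
    have c1 := coeff_pos sr h1 h2 j
    have c2 : 0 < ((j:ℝ) + 2 + sr) * ((j:ℝ) + 1 - sr) := by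
      have := coeff_pos sr h1 h2 (j+1)
      push_cast at this
      nlinarith [this]
    constructor
    · intro h; nlinarith
    · intro h; nlinarith
  have base1 : 0 < gfun r sr 1 := by
    unfold gfun
    norm_num
    apply div_pos
    · apply mul_pos (mul_pos (mul_pos (inv_pos.mpr hr) (by linarith)) _) _
      · exact Real.Gamma_pos_of_pos (by linarith)
      · exact Real.Gamma_pos_of_pos (by linarith)
    · exact mul_pos (Real.Gamma_pos_of_pos (by linarith)) (Real.Gamma_pos_of_pos (by linarith))
  have base2 : 0 < gfun r sr 2 := by
    unfold gfun
    norm_num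
    apply div_pos
    · apply mul_pos (mul_pos (mul_pos (inv_pos.mpr hr) (by linarith)) _) _
      · exact Real.Gamma_pos_of_pos (by linarith)
      · exact Real.Gamma_pos_of_pos (by linarith)
    · exact mul_pos (Real.Gamma_pos_of_pos (by linarith)) (Real.Gamma_pos_of_pos (by linarith))
  have up : ∀ n : ℕ, 0 < gfun r sr (1 + (n:ℤ)) ∧ 0 < gfun r sr (2 + (n:ℤ)) := by
    intro n
    induction n with
    | zero => norm_num [base1, base2]
    | succ m ih =>
      constructor
      · have := ih.2
        rw [show (2:ℤ) + (m:ℤ) = 1 + ((m:ℤ)+1) by ring] at this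
        push_cast
        exact this
      · have := (step (1 + (m:ℤ))).mp ih.1
        rw [show ((1:ℤ) + (m:ℤ)) + 2 = 2 + ((m:ℤ)+1) by ring] at this
        push_cast
        exact this
  have down : ∀ n : ℕ, 0 < gfun r sr (1 - (n:ℤ)) ∧ 0 < gfun r sr (2 - (n:ℤ)) := by
    intro n
    induction n with
    | zero => norm_num [base1, base2]
    | succ m ih =>
      constructor
      · have h := (step (1 - ((m:ℤ)+1))).mpr
        rw [show (1 - ((m:ℤ)+1)) + 2 = 2 - (m:ℤ) by ring] at h
        have := h ih.2
        push_cast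
        exact this
      · have := ih.1
        rw [show (1:ℤ) - (m:ℤ) = 2 - ((m:ℤ)+1) by ring] at this
        push_cast
        exact this
  obtain ⟨n, hn⟩ : ∃ n : ℕ, k = 1 + (n:ℤ) ∨ k = 1 - (n:ℤ) := ⟨(k-1).natAbs, by omega⟩
  rcases hn with h | h <;> rw [h]
  · exact (up n).1
  · exact (down n).1


/-- For every integer `k`, the complex number `ω̃(k)` is real and strictly
positive; that is, `Im(ω̃(k)) = 0` and `Re(ω̃(k)) > 0`. In particular `ω̃(0) > 0`. -/
theorem omega_real_positive (r ζ : ℝ) (hr : 0 < r) (hζ : 0 < ζ)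
    (ν : ℂ)
    (hν : ν = if ζ < 1 / 2 then Complex.I * (Real.sqrt (1 / 4 - ζ ^ 2) : ℂ)
      else (Real.sqrt (ζ ^ 2 - 1 / 4) : ℂ))
    (s : ℂ) (hs : s = -(1 / 2) - Complex.I * ν)
    (ω : ℤ → ℂ)
    (hω : ∀ k : ℤ, ω k =
      (r : ℂ)⁻¹ * ((k : ℂ) + s) *
        Complex.Gamma (((k : ℂ) + s) / 2) * Complex.Gamma (((k : ℂ) + 1 - s) / 2) /
        (Complex.Gamma (((k : ℂ) - s) / 2) * Complex.Gamma (((k : ℂ) + 1 + s) / 2))) :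
    ∀ k : ℤ, (ω k).im = 0 ∧ 0 < (ω k).re := by
  intro k
  by_cases hlt : ζ < 1 / 2
  case neg =>
    -- s = -1/2 - I x with x real; use conjugation symmetry
    set x : ℝ := Real.sqrt (ζ ^ 2 - 1 / 4) with hxdef
    have hν' : ν = (x : ℂ) := by rw [hν, if_neg hlt]
    have hsint : ∀ m : ℤ, s ≠ (m : ℂ) := by
      intro m hm
      have hre : s.re = -(1 / 2) := by rw [hs, hν']; simp
      rw [hm] at hre
      simp only [Complex.intCast_re] at hre
      have h2 : ((2 * m : ℤ) : ℝ) = ((-1 : ℤ) : ℝ) := by push_cast; linarith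
      have := Int.cast_injective h2
      omega
    have hconj : (starRingEnd ℂ) s = -1 - s := by
      rw [hs, hν']
      simp only [map_sub, map_neg, map_mul, Complex.conj_I, Complex.conj_ofReal,
        map_div₀, map_one, map_ofNat]
      ring
    set A : ℂ := ((k : ℂ) + 2 + s) / 2 with hAdef
    set B : ℂ := ((k : ℂ) + 1 + s) / 2 with hBdef
    have hGA : Complex.Gamma A ≠ 0 := by
      rw [show A = (((k + 2 : ℤ) : ℂ) + s) / 2 by rw [hAdef]; push_cast; ring]
      exact gammaC_ne (k + 2) s hsint
    have hGB : Complex.Gamma B ≠ 0 := by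
      rw [show B = (((k + 1 : ℤ) : ℂ) + s) / 2 by rw [hBdef]; push_cast; ring]
      exact gammaC_ne (k + 1) s hsint
    have h1 : ((k : ℂ) + s) * Complex.Gamma (((k : ℂ) + s) / 2) = 2 * Complex.Gamma A := by
      have h0 : ((k : ℂ) + s) / 2 ≠ 0 := argC_ne k s hsint
      rw [show A = ((k : ℂ) + s) / 2 + 1 by rw [hAdef]; ring, Complex.Gamma_add_one _ h0]
      ring
    have hA : Complex.Gamma (((k : ℂ) + 1 - s) / 2) = (starRingEnd ℂ) (Complex.Gamma A) := by
      have hca : (starRingEnd ℂ) A = ((k : ℂ) + 1 - s) / 2 := by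
        rw [hAdef]
        simp only [map_div₀, map_add, hconj, map_intCast, map_ofNat]
        ring
      rw [← hca, Complex.Gamma_conj]
    have hB : Complex.Gamma (((k : ℂ) - s) / 2) = (starRingEnd ℂ) (Complex.Gamma B) := by
      have hcb : (starRingEnd ℂ) B = ((k : ℂ) - s) / 2 := by
        rw [hBdef]
        simp only [map_div₀, map_add, hconj, map_intCast, map_one, map_ofNat]
        ring
      rw [← hcb, Complex.Gamma_conj]
    have key : ω k = ((2 * r⁻¹ * Complex.normSq (Complex.Gamma A) /
        Complex.normSq (Complex.Gamma B) : ℝ) : ℂ) := by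
      rw [hω k, hA, hB]
      have hmA : Complex.Gamma A * (starRingEnd ℂ) (Complex.Gamma A)
          = ((Complex.normSq (Complex.Gamma A) : ℝ) : ℂ) := Complex.mul_conj _
      have e : (r : ℂ)⁻¹ * ((k : ℂ) + s) * Complex.Gamma (((k : ℂ) + s) / 2) *
          (starRingEnd ℂ) (Complex.Gamma A)
          = (r : ℂ)⁻¹ * 2 * ((Complex.normSq (Complex.Gamma A) : ℝ) : ℂ) := by
        linear_combination (r : ℂ)⁻¹ * (starRingEnd ℂ) (Complex.Gamma A) * h1 +
          2 * (r : ℂ)⁻¹ * hmA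
      rw [e, show (starRingEnd ℂ) (Complex.Gamma B) * Complex.Gamma B
          = ((Complex.normSq (Complex.Gamma B) : ℝ) : ℂ) from by
            rw [mul_comm]; exact Complex.mul_conj _]
      push_cast
      ring
    constructor
    · rw [key]; exact Complex.ofReal_im _
    · rw [key, Complex.ofReal_re]
      apply div_pos
      · exact mul_pos (mul_pos two_pos (inv_pos.mpr hr)) (Complex.normSq_pos.mpr hGA)
      · exact Complex.normSq_pos.mpr hGB
  case pos =>
    set x : ℝ := Real.sqrt (1 / 4 - ζ ^ 2) with hxdef
    have hx2 : x ^ 2 = 1 / 4 - ζ ^ 2 := Real.sq_sqrt (by nlinarith)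
    have hxpos : 0 < x := Real.sqrt_pos.mpr (by nlinarith)
    have hxlt : x < 1 / 2 := by nlinarith [sq_nonneg (x - 1 / 2)]
    set sr : ℝ := -(1 / 2) + x with hsrdef
    have hs' : s = ((sr : ℝ) : ℂ) := by
      rw [hs, hν, if_pos hlt, hsrdef]
      push_cast
      linear_combination (-(x : ℂ)) * Complex.I_mul_I
    have bridge : ω k = ((gfun r sr k : ℝ) : ℂ) := by
      have c1 : Complex.Gamma (((k : ℂ) + ((sr : ℝ) : ℂ)) / 2)
          = ((Real.Gamma (((k : ℝ) + sr) / 2) : ℝ) : ℂ) := by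
        rw [show ((k : ℂ) + ((sr : ℝ) : ℂ)) / 2 = (((((k : ℝ) + sr) / 2 : ℝ)) : ℂ) by
          push_cast; ring]
        exact Complex.Gamma_ofReal _
      have c2 : Complex.Gamma (((k : ℂ) + 1 - ((sr : ℝ) : ℂ)) / 2)
          = ((Real.Gamma (((k : ℝ) + 1 - sr) / 2) : ℝ) : ℂ) := by
        rw [show ((k : ℂ) + 1 - ((sr : ℝ) : ℂ)) / 2 = (((((k : ℝ) + 1 - sr) / 2 : ℝ)) : ℂ) by
          push_cast; ring]
        exact Complex.Gamma_ofReal _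
      have c3 : Complex.Gamma (((k : ℂ) - ((sr : ℝ) : ℂ)) / 2)
          = ((Real.Gamma (((k : ℝ) - sr) / 2) : ℝ) : ℂ) := by
        rw [show ((k : ℂ) - ((sr : ℝ) : ℂ)) / 2 = (((((k : ℝ) - sr) / 2 : ℝ)) : ℂ) by
          push_cast; ring]
        exact Complex.Gamma_ofReal _
      have c4 : Complex.Gamma (((k : ℂ) + 1 + ((sr : ℝ) : ℂ)) / 2)
          = ((Real.Gamma (((k : ℝ) + 1 + sr) / 2) : ℝ) : ℂ) := by
        rw [show ((k : ℂ) + 1 + ((sr : ℝ) : ℂ)) / 2 = (((((k : ℝ) + 1 + sr) / 2 : ℝ)) : ℂ) by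
          push_cast; ring]
        exact Complex.Gamma_ofReal _
      rw [hω k, hs', c1, c2, c3, c4]
      unfold gfun
      push_cast
      ring
    have hsr1 : -(1 / 2) < sr := by rw [hsrdef]; linarith
    have hsr2 : sr < 0 := by rw [hsrdef]; linarith
    constructor
    · rw [bridge]; exact Complex.ofReal_im _
    · rw [bridge, Complex.ofReal_re]
      exact gfun_pos r sr hr hsr1 hsr2 k
end

section
/- For every integer k, ω̃(−k) = ω̃(k). -/
open Complex

private lemma omega_key (a b Sa Sb Ca Cb GA GB GA1 GB1 GPA GMA GPB GMB GNA GNB p R : ℂ)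
    (h1 : GA * GA1 * Sa = p) (h2 : GB * GB1 * Sb = p)
    (h3 : GPA * GMA * Ca = p) (h4 : GPB * GMB * Cb = p)
    (h5 : GA1 = -a * GNA) (h6 : GB1 = -b * GNB)
    (h7 : Sa * Cb + Ca * Sb = 0)
    (hSa : Sa ≠ 0) (hSb : Sb ≠ 0) (hCa : Ca ≠ 0) (hCb : Cb ≠ 0)
    (hGNA : GNA ≠ 0) (hGMB : GMB ≠ 0) (hGB : GB ≠ 0) (hGPA : GPA ≠ 0)
    (A1 A2 : ℂ) (hA1 : A1 = -2 * b) (hA2 : A2 = 2 * a) :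
    R * A1 * GNB * GMA / (GNA * GMB) = R * A2 * GA * GPB / (GB * GPA) := by
  rw [div_eq_div_iff (mul_ne_zero hGNA hGMB) (mul_ne_zero hGB hGPA), hA1, hA2]
  apply mul_right_cancel₀ (mul_ne_zero (mul_ne_zero (mul_ne_zero hSa hSb) hCa) hCb)
  linear_combination (-2*R*GMA*GB*GPA*Sa*Sb*Ca*Cb) * h6 + (2*R*GMA*GPA*Sa*Ca*Cb) * h2 +
    (2*R*p*Sa*Cb) * h3 + (-2*R*GA*GPB*GMB*Sa*Sb*Ca*Cb) * h5 + (2*R*GPB*GMB*Sb*Ca*Cb) * h1 +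
    (2*R*p*Sb*Ca) * h4 + (2*R*p^2) * h7

/-- For every integer `k`, `ω̃(−k) = ω̃(k)`. -/
theorem omega_symmetric (r ζ : ℝ) (hr : 0 < r) (hζ : 0 < ζ)
    (ν : ℂ)
    (hν : ν = if ζ < 1 / 2 then Complex.I * (Real.sqrt (1 / 4 - ζ ^ 2) : ℂ)
      else (Real.sqrt (ζ ^ 2 - 1 / 4) : ℂ))
    (s : ℂ) (hs : s = -(1 / 2) - Complex.I * ν)
    (ω : ℤ → ℂ)
    (hω : ∀ k : ℤ, ω k =
      (r : ℂ)⁻¹ * ((k : ℂ) + s) *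
        Complex.Gamma (((k : ℂ) + s) / 2) * Complex.Gamma (((k : ℂ) + 1 - s) / 2) /
        (Complex.Gamma (((k : ℂ) - s) / 2) * Complex.Gamma (((k : ℂ) + 1 + s) / 2))) :
    ∀ k : ℤ, ω (-k) = ω k := by
  -- real part of s lies in [-1/2, 0)
  have hsre : -(1/2 : ℝ) ≤ s.re ∧ s.re < 0 := by
    rw [hs, hν]
    split_ifs with h
    · set t := Real.sqrt (1/4 - ζ^2) with ht
      have h1 : (0:ℝ) < 1/4 - ζ^2 := by nlinarith
      have h2 : 0 < t := Real.sqrt_pos.mpr h1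
      have h3 : t < 1/2 := by
        rw [ht, show (1/2:ℝ) = Real.sqrt (1/4) by
          rw [show (1/4:ℝ) = (1/2)^2 by norm_num, Real.sqrt_sq (by norm_num)]]
        exact Real.sqrt_lt_sqrt (le_of_lt h1) (by nlinarith)
      have he : (-(1/2 : ℂ) - Complex.I * (Complex.I * (t:ℂ))) = ((t - 1/2 : ℝ) : ℂ) := by
        rw [← mul_assoc, Complex.I_mul_I]; push_cast; ring
      rw [he, Complex.ofReal_re]
      constructor <;> linarith
    · set t := Real.sqrt (ζ^2 - 1/4) with ht
      constructor <;>
        simp [Complex.sub_re, Complex.mul_re, Complex.I_re, Complex.I_im,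
          Complex.ofReal_re, Complex.ofReal_im] <;> norm_num
  have h_not_int : ∀ n : ℤ, s ≠ (n:ℂ) := by
    intro n hn
    have h1 : s.re = (n:ℝ) := by rw [hn]; simp
    have h2 : (n:ℝ) < 0 := h1 ▸ hsre.2
    have h3 : -(1/2:ℝ) ≤ (n:ℝ) := h1 ▸ hsre.1
    have h4 : n < 0 := by exact_mod_cast h2
    have h5 : n ≤ -1 := by omega
    have h6 : (n:ℝ) ≤ -1 := by exact_mod_cast h5
    linarith
  have hGp : ∀ m : ℤ, Complex.Gamma (((m:ℂ) + s)/2) ≠ 0 := by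
    intro m
    apply Complex.Gamma_ne_zero
    intro n hn
    exact h_not_int (-2*(n:ℤ) - m) (by push_cast; linear_combination 2*hn)
  have hGm : ∀ m : ℤ, Complex.Gamma (((m:ℂ) - s)/2) ≠ 0 := by
    intro m
    apply Complex.Gamma_ne_zero
    intro n hn
    exact h_not_int (m + 2*(n:ℤ)) (by push_cast; linear_combination (-2)*hn)
  have hπ : (Real.pi : ℂ) ≠ 0 := by exact_mod_cast Real.pi_ne_zero
  intro k
  rw [hω, hω]
  push_cast
  -- sin and cos nonvanishing
  have hSa : Complex.sin ((Real.pi:ℂ) * (((k:ℂ) + s)/2)) ≠ 0 := by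
    rw [Ne, Complex.sin_eq_zero_iff]
    rintro ⟨n, hn⟩
    have h1 : (((k:ℂ) + s)/2) = (n:ℂ) := mul_left_cancel₀ hπ (by linear_combination hn)
    exact h_not_int (2*n - k) (by push_cast; linear_combination 2*h1)
  have hSb : Complex.sin ((Real.pi:ℂ) * (((k:ℂ) - s)/2)) ≠ 0 := by
    rw [Ne, Complex.sin_eq_zero_iff]
    rintro ⟨n, hn⟩
    have h1 : (((k:ℂ) - s)/2) = (n:ℂ) := mul_left_cancel₀ hπ (by linear_combination hn)
    exact h_not_int (k - 2*n) (by push_cast; linear_combination (-2)*h1)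
  have hCa : Complex.cos ((Real.pi:ℂ) * (((k:ℂ) + s)/2)) ≠ 0 := by
    rw [Ne, Complex.cos_eq_zero_iff]
    rintro ⟨n, hn⟩
    have h1 : (((k:ℂ) + s)/2) = (2*(n:ℂ) + 1)/2 := mul_left_cancel₀ hπ (by linear_combination hn)
    exact h_not_int (2*n + 1 - k) (by push_cast; linear_combination 2*h1)
  have hCb : Complex.cos ((Real.pi:ℂ) * (((k:ℂ) - s)/2)) ≠ 0 := by
    rw [Ne, Complex.cos_eq_zero_iff]
    rintro ⟨n, hn⟩
    have h1 : (((k:ℂ) - s)/2) = (2*(n:ℂ) + 1)/2 := mul_left_cancel₀ hπ (by linear_combination hn)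
    exact h_not_int (k - 2*n - 1) (by push_cast; linear_combination (-2)*h1)
  -- reflection formulas
  have h1 : Complex.Gamma (((k:ℂ) + s)/2) * Complex.Gamma ((2 - (k:ℂ) - s)/2) *
      Complex.sin ((Real.pi:ℂ) * (((k:ℂ) + s)/2)) = (Real.pi:ℂ) := by
    have := Complex.Gamma_mul_Gamma_one_sub (((k:ℂ) + s)/2)
    rw [show (1 : ℂ) - ((k:ℂ) + s)/2 = (2 - (k:ℂ) - s)/2 by ring, eq_div_iff hSa] at this
    exact this
  have h2 : Complex.Gamma (((k:ℂ) - s)/2) * Complex.Gamma ((2 - (k:ℂ) + s)/2) *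
      Complex.sin ((Real.pi:ℂ) * (((k:ℂ) - s)/2)) = (Real.pi:ℂ) := by
    have := Complex.Gamma_mul_Gamma_one_sub (((k:ℂ) - s)/2)
    rw [show (1 : ℂ) - ((k:ℂ) - s)/2 = (2 - (k:ℂ) + s)/2 by ring, eq_div_iff hSb] at this
    exact this
  have h3 : Complex.Gamma (((k:ℂ) + 1 + s)/2) * Complex.Gamma ((-(k:ℂ) + 1 - s)/2) *
      Complex.cos ((Real.pi:ℂ) * (((k:ℂ) + s)/2)) = (Real.pi:ℂ) := by
    have := Complex.Gamma_mul_Gamma_one_sub (((k:ℂ) + 1 + s)/2)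
    rw [show (1 : ℂ) - ((k:ℂ) + 1 + s)/2 = (-(k:ℂ) + 1 - s)/2 by ring,
      show (Real.pi:ℂ) * (((k:ℂ) + 1 + s)/2) =
        (Real.pi:ℂ)/2 - (-((Real.pi:ℂ) * (((k:ℂ) + s)/2))) by ring,
      Complex.sin_pi_div_two_sub, Complex.cos_neg, eq_div_iff hCa] at this
    exact this
  have h4 : Complex.Gamma (((k:ℂ) + 1 - s)/2) * Complex.Gamma ((-(k:ℂ) + 1 + s)/2) *
      Complex.cos ((Real.pi:ℂ) * (((k:ℂ) - s)/2)) = (Real.pi:ℂ) := by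
    have := Complex.Gamma_mul_Gamma_one_sub (((k:ℂ) + 1 - s)/2)
    rw [show (1 : ℂ) - ((k:ℂ) + 1 - s)/2 = (-(k:ℂ) + 1 + s)/2 by ring,
      show (Real.pi:ℂ) * (((k:ℂ) + 1 - s)/2) =
        (Real.pi:ℂ)/2 - (-((Real.pi:ℂ) * (((k:ℂ) - s)/2))) by ring,
      Complex.sin_pi_div_two_sub, Complex.cos_neg, eq_div_iff hCb] at this
    exact this
  -- functional equation steps
  have ha0 : ((-(k:ℂ) - s)/2 : ℂ) ≠ 0 := by
    intro h
    exact h_not_int (-k) (by push_cast; linear_combination (-2)*h)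
  have hb0 : ((-(k:ℂ) + s)/2 : ℂ) ≠ 0 := by
    intro h
    exact h_not_int k (by push_cast; linear_combination 2*h)
  have h5 : Complex.Gamma ((2 - (k:ℂ) - s)/2) =
      -(((k:ℂ) + s)/2) * Complex.Gamma ((-(k:ℂ) - s)/2) := by
    have := Complex.Gamma_add_one _ ha0
    rw [show (2 - (k:ℂ) - s)/2 = (-(k:ℂ) - s)/2 + 1 by ring, this]; ring
  have h6 : Complex.Gamma ((2 - (k:ℂ) + s)/2) =
      -(((k:ℂ) - s)/2) * Complex.Gamma ((-(k:ℂ) + s)/2) := by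
    have := Complex.Gamma_add_one _ hb0
    rw [show (2 - (k:ℂ) + s)/2 = (-(k:ℂ) + s)/2 + 1 by ring, this]; ring
  -- trig identity
  have h7 : Complex.sin ((Real.pi:ℂ) * (((k:ℂ) + s)/2)) *
        Complex.cos ((Real.pi:ℂ) * (((k:ℂ) - s)/2)) +
      Complex.cos ((Real.pi:ℂ) * (((k:ℂ) + s)/2)) *
        Complex.sin ((Real.pi:ℂ) * (((k:ℂ) - s)/2)) = 0 := by
    have h0 : Complex.sin ((Real.pi:ℂ) * (((k:ℂ) + s)/2) +
        (Real.pi:ℂ) * (((k:ℂ) - s)/2)) = 0 := by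
      rw [show (Real.pi:ℂ) * (((k:ℂ) + s)/2) + (Real.pi:ℂ) * (((k:ℂ) - s)/2) =
        (k:ℂ) * (Real.pi:ℂ) by push_cast; ring]
      exact Complex.sin_int_mul_pi k
    rw [Complex.sin_add] at h0
    linear_combination h0
  -- Gamma nonvanishing
  have hGNA : Complex.Gamma ((-(k:ℂ) - s)/2) ≠ 0 := by
    have := hGm (-k); push_cast at this; exact this
  have hGMB : Complex.Gamma ((-(k:ℂ) + 1 + s)/2) ≠ 0 := by
    rw [show ((-(k:ℂ) + 1 + s)/2 : ℂ) = (((1 - k : ℤ) : ℂ) + s)/2 by push_cast; ring]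
    exact hGp (1 - k)
  have hGB : Complex.Gamma (((k:ℂ) - s)/2) ≠ 0 := hGm k
  have hGPA : Complex.Gamma (((k:ℂ) + 1 + s)/2) ≠ 0 := by
    rw [show (((k:ℂ) + 1 + s)/2 : ℂ) = (((k + 1 : ℤ) : ℂ) + s)/2 by push_cast; ring]
    exact hGp (k + 1)
  exact omega_key (((k:ℂ) + s)/2) (((k:ℂ) - s)/2) _ _ _ _ _ _ _ _ _ _ _ _ _ _ _ _
    h1 h2 h3 h4 h5 h6 h7 hSa hSb hCa hCb hGNA hGMB hGB hGPA
    _ _ (by ring) (by ring)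
end

section
/- Asymptotically, r·Re(ω̃(k))/|k| tends to 1 as |k| → ∞; i.e., the sequence (r·Re(ω̃(k))/k) for positive integers k tends to 1 as k → +∞, and by the symmetry ω̃(−k) = ω̃(k) the same limit holds as k → −∞ with |k| in the denominator. (This is the same asymptotic behaviour as for the free massive scalar field on Minkowski space.) -/
/-!
Write `q(z) = Γ((z+s)/2) Γ((z+1-s)/2) / (Γ((z-s)/2) Γ((z+1+s)/2))`, so that `r ω̃(k) = (k+s) q(k)`.

The arguments of the two Gamma factors upstairs and downstairs have the same sum, so the factors
`n^z` in Gauss's formula `Γ(z) = lim n^z n! / (z (z+1) ⋯ (z+n))` cancel and, for real `x`,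
`q(x) = ∏_{j ≥ 0} (1 - 2s / ((x+2j+s)(x+2j+1-s)))`. The j-th factor is `1 + O(1/(x+2j)²)`, so
`|q(x) - 1| ≤ exp(4‖s‖/(x-2)) - 1` and `q(x) → 1`, whence `(k+s) q(k) / k → 1`.

For negative `k` the reflection formula gives `Γ(1/2 - a) / Γ(-a) = -a tan(πa) Γ(a) / Γ(a+1/2)`.
Applied to `a = (m+s)/2` and `b = (m-s)/2`, whose sum is the integer `m`, so that
`tan(πa) = -tan(πb)`, it yields `(-m+s) q(-m) = (m+s) q(m)`, i.e. `ω̃(-k) = ω̃(k)`; this only needs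
`s ∉ ℤ`, which holds because `-1/2 ≤ Re s⁺ < 0`.
-/

open Complex Filter Finset Topology
open scoped Real

noncomputable def gammaQuot (s z : ℂ) : ℂ :=
  Gamma ((z + s) / 2) * Gamma ((z + 1 - s) / 2) / (Gamma ((z - s) / 2) * Gamma ((z + 1 + s) / 2))

noncomputable def nu (ζ : ℝ) : ℂ :=
  if ζ < 1 / 2 then I * (Real.sqrt (1 / 4 - ζ ^ 2) : ℂ) else (Real.sqrt (ζ ^ 2 - 1 / 4) : ℂ)

noncomputable def sPlus (ζ : ℝ) : ℂ := -(1 / 2) - I * nu ζ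

lemma GammaSeq_mul_GammaSeq_div_eq_prod {a b c d : ℂ} (h : a + b = c + d)
    (ha : ∀ m : ℕ, a ≠ -m) (hb : ∀ m : ℕ, b ≠ -m) (hc : ∀ m : ℕ, c ≠ -m) (hd : ∀ m : ℕ, d ≠ -m)
    {n : ℕ} (hn : n ≠ 0) :
    GammaSeq a n * GammaSeq b n / (GammaSeq c n * GammaSeq d n) =
      ∏ j ∈ range (n + 1), (c + j) * (d + j) / ((a + j) * (b + j)) := by
  have hprod : ∀ z : ℂ, (∀ m : ℕ, z ≠ -m) → ∏ j ∈ range (n + 1), (z + j) ≠ 0 := fun z hz =>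
    prod_ne_zero_iff.2 fun j _ hj => hz j (eq_neg_of_add_eq_zero_left hj)
  have hn' : (n : ℂ) ≠ 0 := Nat.cast_ne_zero.2 hn
  have hpow : (n : ℂ) ^ a * (n : ℂ) ^ b = (n : ℂ) ^ c * (n : ℂ) ^ d := by
    rw [← cpow_add _ _ hn', ← cpow_add _ _ hn', h]
  have hcpow : ∀ z : ℂ, (n : ℂ) ^ z ≠ 0 := fun z h => hn' ((cpow_eq_zero_iff _ _).1 h).1
  have hfac : (n.factorial : ℂ) ≠ 0 := Nat.cast_ne_zero.2 n.factorial_ne_zero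
  simp only [GammaSeq, prod_div_distrib, prod_mul_distrib]
  field_simp [hprod a ha, hprod b hb, hprod c hc, hprod d hd, hcpow c, hcpow d, hfac]
  linear_combination hpow

lemma tendsto_prod_div_Gamma_mul_Gamma {a b c d : ℂ} (h : a + b = c + d)
    (ha : ∀ m : ℕ, a ≠ -m) (hb : ∀ m : ℕ, b ≠ -m) (hc : ∀ m : ℕ, c ≠ -m) (hd : ∀ m : ℕ, d ≠ -m) :
    Tendsto (fun n => ∏ j ∈ range (n + 1), (c + j) * (d + j) / ((a + j) * (b + j))) atTop
      (𝓝 (Gamma a * Gamma b / (Gamma c * Gamma d))) := by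
  refine (((GammaSeq_tendsto_Gamma a).mul (GammaSeq_tendsto_Gamma b)).div
    ((GammaSeq_tendsto_Gamma c).mul (GammaSeq_tendsto_Gamma d))
    (mul_ne_zero (Gamma_ne_zero hc) (Gamma_ne_zero hd))).congr' ?_
  filter_upwards [eventually_ne_atTop 0] with n hn
  exact GammaSeq_mul_GammaSeq_div_eq_prod h ha hb hc hd hn

lemma sum_range_one_div_add_two_mul_sq_le {c : ℝ} (hc : 2 < c) (m : ℕ) :
    ∑ j ∈ range m, 1 / (c + 2 * j) ^ 2 ≤ 1 / (2 * (c - 2)) := by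
  set g : ℕ → ℝ := fun j => 1 / (2 * (c - 2 + 2 * j))
  have hg : ∀ j : ℕ, 0 < c - 2 + 2 * j := fun j => by positivity
  calc ∑ j ∈ range m, 1 / (c + 2 * j) ^ 2 ≤ ∑ j ∈ range m, (g j - g (j + 1)) := by
        refine sum_le_sum fun j _ => ?_
        have := hg j
        simp only [g]
        rw [div_sub_div _ _ (by positivity) (by positivity),
          div_le_div_iff₀ (by positivity) (by positivity)]
        push_cast
        nlinarith
    _ = g 0 - g m := sum_range_sub' g m
    _ ≤ g 0 := sub_le_self _ (by have := hg m; positivity)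
    _ = 1 / (2 * (c - 2)) := by simp [g]

lemma norm_two_mul_div_le {s : ℂ} {y : ℝ} (hy0 : 0 < y) (hy : 2 * ‖s‖ ≤ y) :
    ‖2 * s / ((y + s) * (y + 1 - s))‖ ≤ 8 * ‖s‖ / y ^ 2 := by
  have h₁ : y / 2 ≤ ‖(y : ℂ) + s‖ := by
    have := norm_sub_norm_le (y : ℂ) (-s)
    rw [sub_neg_eq_add, norm_neg, norm_real, Real.norm_of_nonneg hy0.le] at this
    linarith
  have h₂ : y / 2 ≤ ‖(y : ℂ) + 1 - s‖ := by
    have := norm_sub_norm_le ((y + 1 : ℝ) : ℂ) s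
    rw [norm_real, Real.norm_of_nonneg (by linarith)] at this
    push_cast at this
    linarith
  rw [norm_div, norm_mul, norm_mul, Complex.norm_two]
  calc 2 * ‖s‖ / (‖(y : ℂ) + s‖ * ‖(y : ℂ) + 1 - s‖) ≤ 2 * ‖s‖ / (y / 2 * (y / 2)) := by
        gcongr
    _ = 8 * ‖s‖ / y ^ 2 := by field_simp; ring

lemma ne_neg_natCast_of_re_pos {z : ℂ} (hz : 0 < z.re) (m : ℕ) : z ≠ -m := fun h => by
  have := congrArg re h
  simp only [neg_re, natCast_re] at this
  linarith [m.cast_nonneg (α := ℝ)]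

lemma gammaQuot_factor_eq {s y : ℂ} (h₁ : y + s ≠ 0) (h₂ : y + 1 - s ≠ 0) :
    (y - s) / 2 * ((y + 1 + s) / 2) / ((y + s) / 2 * ((y + 1 - s) / 2)) =
      1 - 2 * s / ((y + s) * (y + 1 - s)) := by
  field_simp
  ring

lemma tendsto_prod_gammaQuot {s : ℂ} {x : ℝ} (hx : ‖s‖ + 1 < x) :
    Tendsto (fun n => ∏ j ∈ range (n + 1), (1 - 2 * s / ((x + 2 * j + s) * (x + 2 * j + 1 - s))))
      atTop (𝓝 (gammaQuot s x)) := by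
  have hre : ∀ t : ℂ, ‖t‖ ≤ ‖s‖ + 1 → ∀ m : ℕ, ((x : ℂ) + t) / 2 ≠ -m := fun t ht =>
    ne_neg_natCast_of_re_pos (by
      have := neg_abs_le t.re
      have := abs_re_le_norm t
      simp only [div_ofNat_re, add_re, ofReal_re]
      linarith)
  have hs₁ : ‖s‖ ≤ ‖s‖ + 1 := by linarith
  have hs₂ : ‖1 - s‖ ≤ ‖s‖ + 1 := (norm_sub_le _ _).trans (by rw [norm_one, add_comm])
  have hs₃ : ‖-s‖ ≤ ‖s‖ + 1 := by rw [norm_neg]; exact hs₁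
  have hs₄ : ‖1 + s‖ ≤ ‖s‖ + 1 := (norm_add_le _ _).trans (by rw [norm_one, add_comm])
  have hlim := tendsto_prod_div_Gamma_mul_Gamma (by ring) (hre s hs₁) (hre (1 - s) hs₂)
    (hre (-s) hs₃) (hre (1 + s) hs₄)
  rw [gammaQuot, add_sub_assoc, sub_eq_add_neg (x : ℂ) s, add_assoc]
  refine hlim.congr fun n => prod_congr rfl fun j _ => ?_
  have h₁ : (x : ℂ) + 2 * j + s ≠ 0 := fun h => hre s hs₁ j (by linear_combination h / 2)
  have h₂ : (x : ℂ) + 2 * j + 1 - s ≠ 0 := fun h => hre (1 - s) hs₂ j (by linear_combination h / 2)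
  rw [← gammaQuot_factor_eq h₁ h₂]
  ring

lemma norm_gammaQuot_sub_one_le {s : ℂ} {x : ℝ} (hx : 2 * ‖s‖ + 3 ≤ x) :
    ‖gammaQuot s x - 1‖ ≤ Real.exp (4 * ‖s‖ / (x - 2)) - 1 := by
  have hs := norm_nonneg s
  have hf : ∀ j : ℕ, ‖-(2 * s / ((x + 2 * j + s) * (x + 2 * j + 1 - s)))‖ ≤
      8 * ‖s‖ * (1 / (x + 2 * j) ^ 2) := fun j => by
    have hj : (0 : ℝ) ≤ j := j.cast_nonneg
    have := norm_two_mul_div_le (s := s) (y := x + 2 * j) (by linarith) (by linarith)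
    push_cast at this
    rwa [norm_neg, mul_one_div]
  refine le_of_tendsto' (((tendsto_prod_gammaQuot (by linarith)).sub_const 1).norm) fun n => ?_
  simp only [sub_eq_add_neg (1 : ℂ)]
  calc _ ≤ Real.exp (∑ j ∈ range (n + 1),
          ‖-(2 * s / ((x + 2 * j + s) * (x + 2 * j + 1 - s)))‖) - 1 :=
        norm_prod_one_add_sub_one_le _ _
    _ ≤ Real.exp (∑ j ∈ range (n + 1), 8 * ‖s‖ * (1 / (x + 2 * j) ^ 2)) - 1 := by
        gcongr with j; exact hf j
    _ ≤ Real.exp (8 * ‖s‖ * (1 / (2 * (x - 2)))) - 1 := by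
        rw [← mul_sum]
        gcongr
        exact sum_range_one_div_add_two_mul_sq_le (by linarith) _
    _ = Real.exp (4 * ‖s‖ / (x - 2)) - 1 := by congr 2; field_simp; ring

lemma tendsto_gammaQuot_atTop (s : ℂ) : Tendsto (fun x : ℝ => gammaQuot s x) atTop (𝓝 1) := by
  rw [tendsto_iff_norm_sub_tendsto_zero]
  refine squeeze_zero' (Eventually.of_forall fun _ => norm_nonneg _)
    ((eventually_ge_atTop (2 * ‖s‖ + 3)).mono fun x hx => norm_gammaQuot_sub_one_le hx) ?_
  have h : Tendsto (fun x : ℝ => 4 * ‖s‖ / (x - 2)) atTop (𝓝 0) :=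
    tendsto_const_nhds.div_atTop (tendsto_atTop_add_const_right _ _ tendsto_id)
  simpa using ((Real.continuous_exp.tendsto 0).comp h).sub_const 1

lemma tendsto_add_mul_gammaQuot_div_atTop (s : ℂ) :
    Tendsto (fun x : ℝ => (x + s) * gammaQuot s x / x) atTop (𝓝 1) := by
  have h : Tendsto (fun x : ℝ => 1 + s * ((x⁻¹ : ℝ) : ℂ)) atTop (𝓝 1) := by
    simpa using (tendsto_inv_atTop_zero.ofReal.const_mul s).const_add 1
  have hprod := h.mul (tendsto_gammaQuot_atTop s)
  rw [one_mul] at hprod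
  refine hprod.congr' ?_
  filter_upwards [eventually_ne_atTop 0] with x hx
  have : (x : ℂ) ≠ 0 := ofReal_ne_zero.2 hx
  push_cast
  field_simp

lemma Gamma_ne_zero_of_two_mul_ne_intCast {a : ℂ} (ha : ∀ n : ℤ, 2 * a ≠ n) : Gamma a ≠ 0 :=
  Gamma_ne_zero fun m hm => ha (-2 * m) (by rw [hm]; push_cast; ring)

lemma Gamma_one_half_sub_div_Gamma_neg {a : ℂ} (ha : ∀ n : ℤ, 2 * a ≠ n) :
    Gamma (1 / 2 - a) / Gamma (-a) = -(a * tan (π * a)) * (Gamma a / Gamma (a + 1 / 2)) := by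
  have ha0 : a ≠ 0 := fun h => ha 0 (by simp [h])
  have hcos : cos (π * a) ≠ 0 := fun h => by
    obtain ⟨k, hk⟩ := cos_eq_zero_iff.1 h
    exact ha (2 * k + 1) (mul_left_cancel₀ (ofReal_ne_zero.2 Real.pi_ne_zero)
      (by push_cast; linear_combination 2 * hk))
  have hsin : sin (π * a) ≠ 0 := fun h => by
    obtain ⟨k, hk⟩ := sin_eq_zero_iff.1 h
    exact ha (2 * k) (mul_left_cancel₀ (ofReal_ne_zero.2 Real.pi_ne_zero)
      (by push_cast; linear_combination 2 * hk))
  have h1 := Gamma_ne_zero_of_two_mul_ne_intCast ha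
  have h2 : Gamma (a + 1 / 2) ≠ 0 := Gamma_ne_zero_of_two_mul_ne_intCast fun n hn =>
    ha (n - 1) (by push_cast; linear_combination hn)
  have h3 : Gamma (-a) ≠ 0 := Gamma_ne_zero_of_two_mul_ne_intCast fun n hn =>
    ha (-n) (by push_cast; linear_combination -hn)
  have hhalf := Gamma_mul_Gamma_one_sub (1 / 2 - a)
  rw [show 1 - (1 / 2 - a) = a + 1 / 2 by ring,
    show (π : ℂ) * (1 / 2 - a) = π / 2 - π * a by ring, sin_pi_div_two_sub] at hhalf
  have hneg := Gamma_mul_Gamma_one_sub (-a)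
  rw [sub_neg_eq_add, add_comm, Gamma_add_one a ha0, mul_neg, sin_neg] at hneg
  rw [tan_eq_sin_div_cos]
  generalize Gamma (1 / 2 - a) = A at *
  generalize Gamma (a + 1 / 2) = B at *
  generalize Gamma (-a) = C at *
  generalize Gamma a = D at *
  generalize cos (π * a) = c at *
  generalize sin (π * a) = t at *
  field_simp at hhalf hneg ⊢
  linear_combination hhalf + hneg

lemma tan_pi_mul_ne_zero {a : ℂ} (ha : ∀ n : ℤ, 2 * a ≠ n) : tan (π * a) ≠ 0 := fun h => by
  obtain ⟨k, hk⟩ := tan_eq_zero_iff.1 h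
  exact ha k (mul_left_cancel₀ (ofReal_ne_zero.2 Real.pi_ne_zero) (by linear_combination -2 * hk))

lemma add_mul_gammaQuot_neg {s : ℂ} (hs : ∀ n : ℤ, s ≠ n) (m : ℤ) :
    (-m + s) * gammaQuot s (-m) = (m + s) * gammaQuot s m := by
  set a := ((m : ℂ) + s) / 2 with ha_def
  set b := ((m : ℂ) - s) / 2 with hb_def
  have ha : ∀ n : ℤ, 2 * a ≠ n := fun n h => hs (n - m) (by push_cast; linear_combination h)
  have hb : ∀ n : ℤ, 2 * b ≠ n := fun n h => hs (m - n) (by push_cast; linear_combination -h)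
  have hb0 : b ≠ 0 := fun h => hb 0 (by simp [h])
  have htan : tan (π * a) = -tan (π * b) := by
    rw [← tan_int_mul_pi_sub]; congr 1; rw [ha_def, hb_def]; ring
  have hneg : gammaQuot s (-m) =
      (Gamma (1 / 2 - a) / Gamma (-a)) / (Gamma (1 / 2 - b) / Gamma (-b)) := by
    rw [gammaQuot, div_div_div_eq, show (-m + s) / 2 = -b by ring,
      show (-m + 1 - s) / 2 = 1 / 2 - a by ring, show (-m - s) / 2 = -a by ring,
      show (-m + 1 + s) / 2 = 1 / 2 - b by ring]
    ring
  have hpos : gammaQuot s m = (Gamma a / Gamma (a + 1 / 2)) / (Gamma b / Gamma (b + 1 / 2)) := by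
    rw [gammaQuot, div_div_div_eq, show (m + 1 - s) / 2 = b + 1 / 2 by ring,
      show (m + 1 + s) / 2 = a + 1 / 2 by ring]
    ring
  rw [hneg, hpos, Gamma_one_half_sub_div_Gamma_neg ha, Gamma_one_half_sub_div_Gamma_neg hb, htan]
  have := tan_pi_mul_ne_zero hb
  generalize Gamma a / Gamma (a + 1 / 2) = A
  generalize Gamma b / Gamma (b + 1 / 2) = B
  generalize tan (π * b) = t at *
  field_simp
  rw [ha_def, hb_def]; ring

lemma re_sPlus_mem_Ioo {ζ : ℝ} (hζ : 0 < ζ) : (sPlus ζ).re ∈ Set.Ioo (-1) 0 := by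
  have him : (nu ζ).im ∈ Set.Ico 0 (1 / 2) := by
    unfold nu
    split_ifs with h
    · simp only [mul_im, I_re, ofReal_im, mul_zero, I_im, ofReal_re, one_mul, zero_add]
      exact ⟨Real.sqrt_nonneg _, (Real.sqrt_lt' one_half_pos).2 (by nlinarith)⟩
    · simp
  have hre : (sPlus ζ).re = -(1 / 2) + (nu ζ).im := by simp [sPlus]
  rw [hre]
  constructor <;> linarith [him.1, him.2]

lemma ne_intCast_of_re_mem_Ioo {s : ℂ} (hs : s.re ∈ Set.Ioo (-1) 0) (n : ℤ) : s ≠ n := by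
  rintro rfl
  simp only [intCast_re, Set.mem_Ioo] at hs
  obtain ⟨h₁, h₂⟩ := hs
  have : (-1 : ℤ) < n := by exact_mod_cast h₁
  have : n < 0 := by exact_mod_cast h₂
  omega

/-- Asymptotically, `r·Re(ω̃(k))/|k| → 1` as `|k| → ∞`: the sequence
`r·Re(ω̃(k))/k` tends to `1` as `k → +∞` through the positive integers, and the same
limit holds as `k → −∞` with `|k|` in the denominator. -/
theorem omega_asymptotics (r ζ : ℝ) (hr : 0 < r) (hζ : 0 < ζ)
    (ν : ℂ)
    (hν : ν = if ζ < 1 / 2 then Complex.I * (Real.sqrt (1 / 4 - ζ ^ 2) : ℂ)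
      else (Real.sqrt (ζ ^ 2 - 1 / 4) : ℂ))
    (s : ℂ) (hs : s = -(1 / 2) - Complex.I * ν)
    (ω : ℤ → ℂ)
    (hω : ∀ k : ℤ, ω k =
      (r : ℂ)⁻¹ * ((k : ℂ) + s) *
        Complex.Gamma (((k : ℂ) + s) / 2) * Complex.Gamma (((k : ℂ) + 1 - s) / 2) /
        (Complex.Gamma (((k : ℂ) - s) / 2) * Complex.Gamma (((k : ℂ) + 1 + s) / 2))) :
    Filter.Tendsto (fun n : ℕ => r * (ω (n : ℤ)).re / (n : ℝ)) Filter.atTop (nhds 1) ∧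
    Filter.Tendsto (fun k : ℤ => r * (ω k).re / ((|k| : ℤ) : ℝ)) Filter.atBot (nhds 1) := by
  have hs_int : ∀ n : ℤ, s ≠ n :=
    ne_intCast_of_re_mem_Ioo (by subst hs hν; exact re_sPlus_mem_Ioo hζ)
  have hrω : ∀ k : ℤ, r * (ω k).re = ((k + s) * gammaQuot s k).re := fun k => by
    have : (r : ℂ) ≠ 0 := ofReal_ne_zero.2 hr.ne'
    rw [← re_ofReal_mul, hω, gammaQuot]
    congr 1
    field_simp
  have hlim : Tendsto (fun x : ℝ => ((x + s) * gammaQuot s x / x).re) atTop (𝓝 1) := by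
    simpa only [one_re, Function.comp_def] using
      (continuous_re.tendsto 1).comp (tendsto_add_mul_gammaQuot_div_atTop s)
  constructor
  · refine (hlim.comp tendsto_natCast_atTop_atTop).congr fun n => ?_
    show ((((n : ℝ) : ℂ) + s) * gammaQuot s (n : ℝ) / ((n : ℝ) : ℂ)).re = _
    rw [div_ofReal_re, hrω]
    push_cast
    rfl
  · refine (hlim.comp (tendsto_intCast_atTop_atTop.comp tendsto_neg_atBot_atTop)).congr' ?_
    filter_upwards [eventually_le_atBot 0] with k hk
    show ((((-k : ℤ) : ℝ) + s) * gammaQuot s ((-k : ℤ) : ℝ) / (((-k : ℤ) : ℝ) : ℂ)).re = _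
    have hsymm := add_mul_gammaQuot_neg hs_int (-k)
    rw [Int.cast_neg, neg_neg] at hsymm
    rw [div_ofReal_re, hrω, abs_of_nonpos hk, hsymm]
    push_cast
    rfl
end

section
/- There exist positive real constants a and b such that for every integer k, |k| ≤ b·Re(ω̃(k)) and Re(ω̃(k)) ≤ Re(ω̃(0)) + a·|k|. -/
set_option maxHeartbeats 1000000 in
theorem omegaAuxReal (r ζ : ℝ) (hr : 0 < r) (hζ : 0 < ζ) (W : ℤ → ℝ)
    (hP : ∀ k : ℤ, W k * W (k + 1) = ((k : ℝ) ^ 2 + k + ζ ^ 2) / r ^ 2)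
    (hW0 : 0 < W 0) :
    ∃ a b : ℝ, 0 < a ∧ 0 < b ∧ ∀ k : ℤ,
      ((|k| : ℤ) : ℝ) ≤ b * W k ∧ W k ≤ W 0 + a * ((|k| : ℤ) : ℝ) := by
  let c : ℤ → ℝ := fun k => ((k : ℝ) ^ 2 + k + ζ ^ 2) / r ^ 2
  have hr2 : (0:ℝ) < r ^ 2 := by positivity
  have hP' : ∀ k : ℤ, W k * W (k + 1) = c k := fun k => hP k
  have hc : ∀ k : ℤ, 0 < c k := by
    intro k
    have h1 : (0:ℝ) ≤ (k:ℝ)^2 + k := by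
      rcases le_or_gt 0 k with h | h
      · have : (0:ℝ) ≤ (k:ℝ) := by exact_mod_cast h
        nlinarith
      · have hk1 : k ≤ -1 := by omega
        have : (k:ℝ) ≤ -1 := by exact_mod_cast hk1
        nlinarith
    have : (0:ℝ) < (k:ℝ)^2 + k + ζ^2 := by nlinarith
    exact div_pos this hr2
  have hne : ∀ k : ℤ, W k ≠ 0 := by
    intro k h0
    have := hP' k
    rw [h0, zero_mul] at this
    replace this := this.symm
    exact absurd this (hc k).ne'
  have hpos : ∀ n : ℕ, 0 < W n := by
    intro n
    induction n with
    | zero => simpa using hW0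
    | succ m ih =>
      have h1 := hP (m : ℤ)
      have hm0 : (0:ℝ) ≤ ((m:ℤ):ℝ) := by exact_mod_cast Int.natCast_nonneg m
      have h2 : (0:ℝ) < ((m:ℤ):ℝ)^2 + ((m:ℤ):ℝ) + ζ^2 := by nlinarith
      have hd : (0:ℝ) < (((m:ℤ):ℝ)^2 + ((m:ℤ):ℝ) + ζ^2)/r^2 := div_pos h2 hr2
      have : W ((m:ℤ)+1) > 0 := by nlinarith
      have e : ((m+1:ℕ):ℤ) = (m:ℤ)+1 := by push_cast; ring
      rw [e]; exact this
  have hposZ : ∀ k : ℤ, 0 ≤ k → 0 < W k := by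
    intro k hk
    have := hpos k.toNat
    rwa [Int.toNat_of_nonneg hk] at this
  have hsym : ∀ n : ℕ, W (-(n:ℤ)) = W n := by
    intro n
    induction n with
    | zero => simp
    | succ m ih =>
      have h1 := hP (-(m:ℤ)-1)
      have h2 := hP (m : ℤ)
      have e1 : (-(m:ℤ)-1) + 1 = -(m:ℤ) := by ring
      rw [e1] at h1
      have h3 : W (-(m:ℤ)-1) * W (-(m:ℤ)) = W m * W ((m:ℤ)+1) := by
        rw [h1, h2]; push_cast; ring
      rw [ih, mul_comm (W (m:ℤ))] at h3
      have h4 : W (-(m:ℤ)-1) = W ((m:ℤ)+1) := mul_right_cancel₀ (hne (m:ℤ)) h3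
      have e3 : (-(↑(m+1):ℕ):ℤ) = -(m:ℤ)-1 := by push_cast; ring
      have e4 : ((m+1:ℕ):ℤ) = (m:ℤ)+1 := by push_cast; ring
      rw [e3, e4, h4]
  have hstep : ∀ k : ℤ, W (k+2) * c k = c (k+1) * W k := by
    intro k
    have h1 := hP k
    have h2 := hP (k+1)
    rw [show k+1+1 = k+2 by ring] at h2
    calc W (k+2) * c k = W (k+2) * (W k * W (k+1)) := by rw [h1]
    _ = W k * (W (k+1) * W (k+2)) := by ring
    _ = c (k+1) * W k := by rw [h2]; ring
  have hq : ∀ t : ℝ, 0 ≤ t → 0 < t^2 + t + ζ^2 := by intro t ht; nlinarith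
  have hstepR : ∀ k : ℤ, W (k+2) * ((k:ℝ)^2 + (k:ℝ) + ζ^2)
      = (((k:ℝ)+1)^2 + ((k:ℝ)+1) + ζ^2) * W k := by
    intro k
    have h := hstep k
    have e1 : c k * r^2 = (k:ℝ)^2 + (k:ℝ) + ζ^2 := div_mul_cancel₀ _ hr2.ne'
    have e2 : c (k+1) * r^2 = ((k:ℝ)+1)^2 + ((k:ℝ)+1) + ζ^2 := by
      have h' : c (k+1) * r^2 = ((k+1:ℤ):ℝ)^2 + ((k+1:ℤ):ℝ) + ζ^2 := div_mul_cancel₀ _ hr2.ne'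
      rw [h']; push_cast; ring
    calc W (k+2) * ((k:ℝ)^2+(k:ℝ)+ζ^2) = (W (k+2) * c k) * r^2 := by rw [← e1]; ring
    _ = (c (k+1) * r^2) * W k := by rw [h]; ring
    _ = _ := by rw [e2]
  have hW1 : 0 < W 1 := hposZ 1 (by norm_num)
  have hW2 : 0 < W 2 := hposZ 2 (by norm_num)
  have hW3 : 0 < W 3 := hposZ 3 (by norm_num)
  -- lower bound, even indices
  have Lu : ∀ m : ℕ, W 0 * ((m:ℝ) + ζ^2/2) ≤ W (2*(m:ℤ)) * (ζ^2/2) := by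
    intro m
    induction m with
    | zero => simp
    | succ m ih =>
      have hst := hstepR (2*(m:ℤ))
      push_cast at hst
      have hA : 0 < W (2*(m:ℤ)) := hposZ _ (by positivity)
      have hm0 : (0:ℝ) ≤ (m:ℝ) := Nat.cast_nonneg m
      have hPp : (0:ℝ) < (2*(m:ℝ))^2 + 2*(m:ℝ) + ζ^2 := hq _ (by positivity)
      have hQp : (0:ℝ) < (2*(m:ℝ)+1)^2 + (2*(m:ℝ)+1) + ζ^2 := hq _ (by positivity)
      have key : ((2*(m:ℝ))^2 + 2*(m:ℝ) + ζ^2) * ((m:ℝ)+1+ζ^2/2)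
          ≤ ((2*(m:ℝ)+1)^2 + (2*(m:ℝ)+1) + ζ^2) * ((m:ℝ)+ζ^2/2) := by
        nlinarith [mul_nonneg hm0 (sq_nonneg ζ)]
      have e : (2*((m+1:ℕ):ℤ)) = 2*(m:ℤ)+2 := by push_cast; ring
      rw [e]; push_cast
      have h5 : W 0 * ((m:ℝ)+1+ζ^2/2) * ((2*(m:ℝ))^2 + 2*(m:ℝ) + ζ^2)
          ≤ W (2*(m:ℤ)+2) * (ζ^2/2) * ((2*(m:ℝ))^2 + 2*(m:ℝ) + ζ^2) := by
        nlinarith [mul_le_mul_of_nonneg_left ih hQp.le, mul_le_mul_of_nonneg_left key hW0.le]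
      exact le_of_mul_le_mul_right h5 hPp
  -- upper bound, even indices
  have Lu2 : ∀ m : ℕ, 1 ≤ m → W (2*(m:ℤ)) ≤ W 2 * m := by
    intro m hm'
    induction m, hm' using Nat.le_induction with
    | base => norm_num
    | succ m hm ih =>
      have hst := hstepR (2*(m:ℤ))
      push_cast at hst
      have hA : 0 < W (2*(m:ℤ)) := hposZ _ (by positivity)
      have hm1 : (1:ℝ) ≤ (m:ℝ) := by exact_mod_cast hm
      have hPp : (0:ℝ) < (2*(m:ℝ))^2 + 2*(m:ℝ) + ζ^2 := hq _ (by positivity)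
      have key : (m:ℝ) * ((2*(m:ℝ)+1)^2 + (2*(m:ℝ)+1) + ζ^2)
          ≤ ((m:ℝ)+1) * ((2*(m:ℝ))^2 + 2*(m:ℝ) + ζ^2) := by nlinarith [sq_nonneg ζ]
      have e : (2*((m+1:ℕ):ℤ)) = 2*(m:ℤ)+2 := by push_cast; ring
      rw [e]; push_cast
      have h5 : W (2*(m:ℤ)+2) * ((m:ℝ) * ((2*(m:ℝ))^2 + 2*(m:ℝ) + ζ^2))
          ≤ W 2 * ((m:ℝ)+1) * ((m:ℝ) * ((2*(m:ℝ))^2 + 2*(m:ℝ) + ζ^2)) := by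
        nlinarith [mul_le_mul_of_nonneg_right key hA.le,
          mul_le_mul_of_nonneg_left ih (mul_pos (mul_pos (by linarith : (0:ℝ) < (m:ℝ)) hPp) ((by norm_num : (0:ℝ) < 1))).le,
          mul_le_mul_of_nonneg_right ih (mul_pos (by linarith : (0:ℝ) < (m:ℝ)) hPp).le]
      have hmp : (0:ℝ) < (m:ℝ) * ((2*(m:ℝ))^2 + 2*(m:ℝ) + ζ^2) :=
        mul_pos (by linarith) hPp
      exact le_of_mul_le_mul_right h5 hmp
  -- lower bound, odd indices
  have Lv : ∀ m : ℕ, W 1 * ((m:ℝ) + (2+ζ^2)/4) ≤ W (2*(m:ℤ)+1) * ((2+ζ^2)/4) := by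
    intro m
    induction m with
    | zero => simp
    | succ m ih =>
      have hst := hstepR (2*(m:ℤ)+1)
      push_cast at hst
      have hA : 0 < W (2*(m:ℤ)+1) := hposZ _ (by positivity)
      have hm0 : (0:ℝ) ≤ (m:ℝ) := Nat.cast_nonneg m
      have hPp : (0:ℝ) < (2*(m:ℝ)+1)^2 + (2*(m:ℝ)+1) + ζ^2 := hq _ (by positivity)
      have hQp : (0:ℝ) < (2*(m:ℝ)+1+1)^2 + (2*(m:ℝ)+1+1) + ζ^2 := hq _ (by positivity)
      have key : ((2*(m:ℝ)+1)^2 + (2*(m:ℝ)+1) + ζ^2) * ((m:ℝ)+1+(2+ζ^2)/4)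
          ≤ ((2*(m:ℝ)+1+1)^2 + (2*(m:ℝ)+1+1) + ζ^2) * ((m:ℝ)+(2+ζ^2)/4) := by
        nlinarith [mul_nonneg hm0 (sq_nonneg ζ)]
      have e : (2*((m+1:ℕ):ℤ)+1) = (2*(m:ℤ)+1)+2 := by push_cast; ring
      rw [e]; push_cast
      have h5 : W 1 * ((m:ℝ)+1+(2+ζ^2)/4) * ((2*(m:ℝ)+1)^2 + (2*(m:ℝ)+1) + ζ^2)
          ≤ W ((2*(m:ℤ)+1)+2) * ((2+ζ^2)/4) * ((2*(m:ℝ)+1)^2 + (2*(m:ℝ)+1) + ζ^2) := by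
        nlinarith [mul_le_mul_of_nonneg_left ih hQp.le, mul_le_mul_of_nonneg_left key hW1.le]
      exact le_of_mul_le_mul_right h5 hPp
  -- upper bound, odd indices
  have Lv2 : ∀ m : ℕ, 1 ≤ m → W (2*(m:ℤ)+1) ≤ W 3 * m := by
    intro m hm'
    induction m, hm' using Nat.le_induction with
    | base => norm_num
    | succ m hm ih =>
      have hst := hstepR (2*(m:ℤ)+1)
      push_cast at hst
      have hA : 0 < W (2*(m:ℤ)+1) := hposZ _ (by positivity)
      have hm1 : (1:ℝ) ≤ (m:ℝ) := by exact_mod_cast hm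
      have hPp : (0:ℝ) < (2*(m:ℝ)+1)^2 + (2*(m:ℝ)+1) + ζ^2 := hq _ (by positivity)
      have key : (m:ℝ) * ((2*(m:ℝ)+1+1)^2 + (2*(m:ℝ)+1+1) + ζ^2)
          ≤ ((m:ℝ)+1) * ((2*(m:ℝ)+1)^2 + (2*(m:ℝ)+1) + ζ^2) := by nlinarith [sq_nonneg ζ]
      have e : (2*((m+1:ℕ):ℤ)+1) = (2*(m:ℤ)+1)+2 := by push_cast; ring
      rw [e]; push_cast
      have h5 : W ((2*(m:ℤ)+1)+2) * ((m:ℝ) * ((2*(m:ℝ)+1)^2 + (2*(m:ℝ)+1) + ζ^2))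
          ≤ W 3 * ((m:ℝ)+1) * ((m:ℝ) * ((2*(m:ℝ)+1)^2 + (2*(m:ℝ)+1) + ζ^2)) := by
        nlinarith [mul_le_mul_of_nonneg_right key hA.le,
          mul_le_mul_of_nonneg_right ih (mul_pos (by linarith : (0:ℝ) < (m:ℝ)) hPp).le]
      have hmp : (0:ℝ) < (m:ℝ) * ((2*(m:ℝ)+1)^2 + (2*(m:ℝ)+1) + ζ^2) :=
        mul_pos (by linarith) hPp
      exact le_of_mul_le_mul_right h5 hmp
  -- assemble
  refine ⟨W 1 + W 2 + W 3 + 1, (ζ^2+1)/W 0 + (ζ^2+2)/W 1, by positivity, by positivity, ?_⟩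
  have key : ∀ n : ℕ, (n:ℝ) ≤ ((ζ^2+1)/W 0 + (ζ^2+2)/W 1) * W (n:ℤ) ∧
      W (n:ℤ) ≤ W 0 + (W 1 + W 2 + W 3 + 1) * (n:ℝ) := by
    intro n
    rcases Nat.even_or_odd n with ⟨m, hm⟩ | ⟨m, hm⟩
    · subst hm
      have e : ((m+m:ℕ):ℤ) = 2*(m:ℤ) := by push_cast; ring
      rw [e]
      have hA : 0 < W (2*(m:ℤ)) := hposZ _ (by positivity)
      have hm0 : (0:ℝ) ≤ (m:ℝ) := Nat.cast_nonneg m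
      constructor
      · have h1 : ((m+m:ℕ):ℝ) ≤ (ζ^2+1)/W 0 * W (2*(m:ℤ)) := by
          rw [div_mul_eq_mul_div, le_div_iff₀ hW0]
          push_cast
          nlinarith [Lu m, hA, hW0, sq_nonneg ζ]
        have h2 : 0 ≤ (ζ^2+2)/W 1 * W (2*(m:ℤ)) := by positivity
        linarith
      · rcases Nat.eq_zero_or_pos m with h0 | h0
        · subst h0; push_cast; norm_num
        · have l2 := Lu2 m h0
          have hm1 : (1:ℝ) ≤ (m:ℝ) := by exact_mod_cast h0
          push_cast
          nlinarith [l2, hW0, hW1, hW3, hW2]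
    · subst hm
      have e : ((2*m+1:ℕ):ℤ) = 2*(m:ℤ)+1 := by push_cast; ring
      rw [e]
      have hA : 0 < W (2*(m:ℤ)+1) := hposZ _ (by positivity)
      have hm0 : (0:ℝ) ≤ (m:ℝ) := Nat.cast_nonneg m
      constructor
      · have h1 : ((2*m+1:ℕ):ℝ) ≤ (ζ^2+2)/W 1 * W (2*(m:ℤ)+1) := by
          rw [div_mul_eq_mul_div, le_div_iff₀ hW1]
          push_cast
          nlinarith [Lv m, mul_nonneg hW1.le (sq_nonneg ζ), mul_nonneg hW1.le hm0]
        have h2 : 0 ≤ (ζ^2+1)/W 0 * W (2*(m:ℤ)+1) := by positivity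
        linarith
      · rcases Nat.eq_zero_or_pos m with h0 | h0
        · subst h0; push_cast; norm_num
          nlinarith [hW0, hW2, hW3]
        · have l2 := Lv2 m h0
          have hm1 : (1:ℝ) ≤ (m:ℝ) := by exact_mod_cast h0
          push_cast
          nlinarith [l2, hW0, hW1, hW2]
  intro k
  have habs : ((|k|:ℤ):ℝ) = (k.natAbs : ℝ) := by
    rw [Nat.cast_natAbs, Int.cast_abs]
  have hWk : W k = W (k.natAbs : ℤ) := by
    rcases Int.natAbs_eq k with h | h
    · exact congrArg W h
    · calc W k = W (-(k.natAbs:ℤ)) := by rw [← h]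
        _ = _ := hsym _
  rw [habs, hWk]
  exact key k.natAbs


/-- There exist positive real constants `a` and `b` such that for every
integer `k`, `|k| ≤ b·Re(ω̃(k))` and `Re(ω̃(k)) ≤ Re(ω̃(0)) + a·|k|`. -/
theorem omega_linear_bounds (r ζ : ℝ) (hr : 0 < r) (hζ : 0 < ζ)
    (ν : ℂ)
    (hν : ν = if ζ < 1 / 2 then Complex.I * (Real.sqrt (1 / 4 - ζ ^ 2) : ℂ)
      else (Real.sqrt (ζ ^ 2 - 1 / 4) : ℂ))
    (s : ℂ) (hs : s = -(1 / 2) - Complex.I * ν)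
    (ω : ℤ → ℂ)
    (hω : ∀ k : ℤ, ω k =
      (r : ℂ)⁻¹ * ((k : ℂ) + s) *
        Complex.Gamma (((k : ℂ) + s) / 2) * Complex.Gamma (((k : ℂ) + 1 - s) / 2) /
        (Complex.Gamma (((k : ℂ) - s) / 2) * Complex.Gamma (((k : ℂ) + 1 + s) / 2))) :
    ∃ a b : ℝ, 0 < a ∧ 0 < b ∧ ∀ k : ℤ,
      ((|k| : ℤ) : ℝ) ≤ b * (ω k).re ∧ (ω k).re ≤ (ω 0).re + a * ((|k| : ℤ) : ℝ) := by
  have hr0 : (r : ℂ) ≠ 0 := by exact_mod_cast hr.ne'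
  have hν2 : ν ^ 2 = (ζ : ℂ) ^ 2 - 1 / 4 := by
    rw [hν]; split_ifs with h
    · have h1 : (0:ℝ) ≤ 1/4 - ζ^2 := by nlinarith
      have h2 : Real.sqrt (1/4 - ζ^2) ^ 2 = 1/4 - ζ^2 := Real.sq_sqrt h1
      have h3 : ((Real.sqrt (1/4 - ζ^2) : ℝ) : ℂ)^2 = ((1/4 - ζ^2 : ℝ) : ℂ) := by
        rw [← Complex.ofReal_pow, h2]
      calc (Complex.I * ((Real.sqrt (1/4 - ζ^2) : ℝ) : ℂ))^2
          = Complex.I^2 * ((Real.sqrt (1/4 - ζ^2) : ℝ) : ℂ)^2 := by ring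
        _ = (ζ:ℂ)^2 - 1/4 := by rw [Complex.I_sq, h3]; push_cast; ring
    · have h1 : (0:ℝ) ≤ ζ^2 - 1/4 := by nlinarith [not_lt.mp h]
      have h2 : Real.sqrt (ζ^2 - 1/4) ^ 2 = ζ^2 - 1/4 := Real.sq_sqrt h1
      rw [← Complex.ofReal_pow, h2]; push_cast; ring
  have hdicho : (∃ x : ℝ, s = (x:ℂ) ∧ -1 < x ∧ x < 0) ∨
      ((starRingEnd ℂ) s = -1 - s ∧ s.im ≠ 0) := by
    have hs' := hs; rw [hν] at hs'
    split_ifs at hs' with h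
    · left
      have h1 : (0:ℝ) ≤ 1/4 - ζ^2 := by nlinarith
      refine ⟨-(1/2) + Real.sqrt (1/4 - ζ^2), ?_, ?_, ?_⟩
      · rw [hs']; push_cast
        linear_combination (-(Real.sqrt (1/4 - ζ^2) : ℂ)) * Complex.I_mul_I
      · nlinarith [Real.sqrt_nonneg (1/4 - ζ^2)]
      · nlinarith [Real.sq_sqrt h1, Real.sqrt_nonneg (1/4 - ζ^2)]
    · by_cases hz : ζ = 1/2
      · left
        refine ⟨-(1/2), ?_, by norm_num, by norm_num⟩
        rw [hs', hz]
        norm_num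
      · right
        have hgt : 1/2 < ζ := lt_of_le_of_ne (not_lt.mp h) (Ne.symm hz)
        have h1 : (0:ℝ) < ζ^2 - 1/4 := by nlinarith
        have h2 : 0 < Real.sqrt (ζ^2 - 1/4) := Real.sqrt_pos.mpr h1
        constructor
        · rw [hs']
          simp only [map_sub, map_mul, map_neg, map_one, Complex.conj_I,
            Complex.conj_ofReal, map_div₀, map_ofNat]
          ring
        · have him : s.im = -Real.sqrt (ζ^2 - 1/4) := by rw [hs']; simp
          rw [him]
          simpa using h2.ne'
  have hsne : ∀ n : ℤ, s ≠ (n : ℂ) := by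
    intro n hn
    rcases hdicho with ⟨x, hx, hx1, hx2⟩ | ⟨-, him⟩
    · rw [hx] at hn
      have hxn : x = (n:ℝ) := by exact_mod_cast hn
      have hA : n < 0 := by exact_mod_cast (by linarith : (n:ℝ) < 0)
      have hB : (-1:ℤ) < n := by exact_mod_cast (by linarith : (-1:ℝ) < (n:ℝ))
      omega
    · apply him; rw [hn]; simp
  have hsnz : ∀ n : ℤ, (n:ℂ) + s ≠ 0 := by
    intro n h
    apply hsne (-n); push_cast; linear_combination h
  have hsnz' : ∀ n : ℤ, (n:ℂ) - s ≠ 0 := by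
    intro n h
    apply hsne n; linear_combination -h
  have hΓp : ∀ n : ℤ, Complex.Gamma (((n:ℂ) + s)/2) ≠ 0 := by
    intro n
    apply Complex.Gamma_ne_zero
    intro m hm
    rw [div_eq_iff (two_ne_zero' ℂ)] at hm
    apply hsne (-2*(m:ℤ) - n)
    push_cast
    linear_combination hm
  have hΓm : ∀ n : ℤ, Complex.Gamma (((n:ℂ) - s)/2) ≠ 0 := by
    intro n
    apply Complex.Gamma_ne_zero
    intro m hm
    rw [div_eq_iff (two_ne_zero' ℂ)] at hm
    apply hsne (n + 2*(m:ℤ))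
    push_cast
    linear_combination -hm
  have hprod : ∀ k : ℤ, ((k:ℂ)+1+s)*((k:ℂ)-s) = (k:ℂ)^2 + (k:ℂ) + (ζ:ℂ)^2 := by
    intro k
    rw [hs]
    linear_combination hν2 - ν^2 * Complex.I_sq
  have hP : ∀ k : ℤ, ω k * ω (k+1) = ((k:ℂ)^2 + (k:ℂ) + (ζ:ℂ)^2)/(r:ℂ)^2 := by
    intro k
    have hg1 := hΓp k
    have hg2 := hΓm k
    have hg3 : Complex.Gamma (((k:ℂ)+1+s)/2) ≠ 0 := by
      have := hΓp (k+1); push_cast at this; exact this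
    have hg4 : Complex.Gamma (((k:ℂ)+1-s)/2) ≠ 0 := by
      have := hΓm (k+1); push_cast at this; exact this
    have e1 : ((k:ℂ)+1+1-s)/2 = ((k:ℂ)-s)/2 + 1 := by ring
    have e2 : ((k:ℂ)+1+1+s)/2 = ((k:ℂ)+s)/2 + 1 := by ring
    have h5 : (k:ℂ) + s ≠ 0 := hsnz k
    have h6 : ((k:ℂ) + s)/2 ≠ 0 := div_ne_zero h5 (two_ne_zero' ℂ)
    have hD : (Complex.Gamma (((k:ℂ)-s)/2) * Complex.Gamma (((k:ℂ)+1+s)/2)) *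
        (Complex.Gamma (((k:ℂ)+1-s)/2) * (((k:ℂ)+s)/2 * Complex.Gamma (((k:ℂ)+s)/2))) ≠ 0 :=
      mul_ne_zero (mul_ne_zero hg2 hg3) (mul_ne_zero hg4 (mul_ne_zero h6 hg1))
    rw [hω k, hω (k+1)]
    push_cast
    rw [e1, e2, Complex.Gamma_add_one _ (div_ne_zero (hsnz' k) (two_ne_zero' ℂ)),
      Complex.Gamma_add_one _ h6]
    rw [div_mul_div_comm, div_eq_div_iff hD (pow_ne_zero 2 hr0), ← hprod k]
    field_simp
  have hconj : ∀ k : ℤ, (starRingEnd ℂ) (ω k) = ω k := by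
    intro k
    rcases hdicho with ⟨x, hx, -, -⟩ | ⟨hcs, -⟩
    · rw [hω k, hx]
      simp only [map_div₀, map_mul, map_inv₀, map_add, map_sub, map_one, map_ofNat,
        map_intCast, Complex.conj_ofReal, ← Complex.Gamma_conj]
    · have hnz0 : (k:ℂ)-1-s ≠ 0 := by
        have := hsnz' (k-1); push_cast at this
        intro h0; apply this; linear_combination h0
      have hnz1 : ((k:ℂ)-1-s)/2 ≠ 0 := div_ne_zero hnz0 (two_ne_zero' ℂ)
      have hA : Complex.Gamma (((k:ℂ)+1-s)/2)
          = (((k:ℂ)-1-s)/2) * Complex.Gamma (((k:ℂ)-1-s)/2) := by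
        rw [show ((k:ℂ)+1-s)/2 = ((k:ℂ)-1-s)/2 + 1 by ring,
          Complex.Gamma_add_one _ hnz1]
      have hB : Complex.Gamma (((k:ℂ)+2+s)/2)
          = (((k:ℂ)+s)/2) * Complex.Gamma (((k:ℂ)+s)/2) := by
        rw [show ((k:ℂ)+2+s)/2 = ((k:ℂ)+s)/2 + 1 by ring,
          Complex.Gamma_add_one _ (div_ne_zero (hsnz k) (two_ne_zero' ℂ))]
      have hL : (starRingEnd ℂ) (ω k) = (r:ℂ)⁻¹ * ((k:ℂ)-1-s) *
          Complex.Gamma (((k:ℂ)-1-s)/2) * Complex.Gamma (((k:ℂ)+2+s)/2) /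
          (Complex.Gamma (((k:ℂ)+1+s)/2) * Complex.Gamma (((k:ℂ)-s)/2)) := by
        rw [hω k]
        simp only [map_div₀, map_mul, map_inv₀, map_add, map_sub, map_one, map_ofNat,
          map_intCast, Complex.conj_ofReal, ← Complex.Gamma_conj, hcs]
        rw [show ((k:ℂ) + (-1-s))/2 = ((k:ℂ)-1-s)/2 by ring,
          show ((k:ℂ) + 1 - (-1-s))/2 = ((k:ℂ)+2+s)/2 by ring,
          show ((k:ℂ) - (-1-s))/2 = ((k:ℂ)+1+s)/2 by ring,
          show ((k:ℂ) + 1 + (-1-s))/2 = ((k:ℂ)-s)/2 by ring]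
        ring
      rw [hL, hω k, hA, hB]
      ring
  have hreal : ∀ k : ℤ, ω k = (((ω k).re : ℝ) : ℂ) := by
    intro k
    exact (Complex.conj_eq_iff_re.mp (hconj k)).symm
  have hPr : ∀ k : ℤ, (ω k).re * (ω (k+1)).re = ((k:ℝ)^2 + (k:ℝ) + ζ^2)/r^2 := by
    intro k
    have h := hP k
    rw [hreal k, hreal (k+1)] at h
    exact_mod_cast h
  have hW0 : 0 < (ω 0).re := by
    rcases hdicho with ⟨x, hx, hx1, hx2⟩ | ⟨hcs, -⟩
    · have hgx : Real.Gamma (x/2+1) = (x/2) * Real.Gamma (x/2) :=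
        Real.Gamma_add_one (div_ne_zero hx2.ne (two_ne_zero' ℝ))
      have h0 : ω 0 = ((r⁻¹ * (2 * Real.Gamma (x/2+1)) * Real.Gamma ((1-x)/2) /
          (Real.Gamma (-x/2) * Real.Gamma ((1+x)/2)) : ℝ) : ℂ) := by
        rw [hω 0, hx]
        push_cast
        rw [show ((0:ℂ)+(x:ℂ))/2 = (((x/2 : ℝ)):ℂ) by push_cast; ring,
          show ((0:ℂ)+1-(x:ℂ))/2 = ((((1-x)/2 : ℝ)):ℂ) by push_cast; ring,
          show ((0:ℂ)-(x:ℂ))/2 = (((-x/2 : ℝ)):ℂ) by push_cast; ring,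
          show ((0:ℂ)+1+(x:ℂ))/2 = ((((1+x)/2 : ℝ)):ℂ) by push_cast; ring,
          Complex.Gamma_ofReal, Complex.Gamma_ofReal, Complex.Gamma_ofReal,
          Complex.Gamma_ofReal, hgx]
        push_cast
        ring
      rw [h0, Complex.ofReal_re]
      have g1 : 0 < Real.Gamma (x/2+1) := Real.Gamma_pos_of_pos (by linarith)
      have g2 : 0 < Real.Gamma ((1-x)/2) := Real.Gamma_pos_of_pos (by linarith)
      have g3 : 0 < Real.Gamma (-x/2) := Real.Gamma_pos_of_pos (by linarith)
      have g4 : 0 < Real.Gamma ((1+x)/2) := Real.Gamma_pos_of_pos (by linarith)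
      positivity
    · have hs0 : s ≠ 0 := by
        have := hsne 0; simpa using this
      have hz1 : Complex.Gamma (s/2) ≠ 0 := by
        have := hΓp 0; simpa using this
      have hz2 : Complex.Gamma ((-s)/2) ≠ 0 := by
        have := hΓm 0
        simpa [zero_sub, neg_div] using this
      have hcj : (starRingEnd ℂ) s / 2 = (starRingEnd ℂ) (s/2) := by
        rw [map_div₀, map_ofNat]
      have e1 : Complex.Gamma ((1-s)/2)
          = (starRingEnd ℂ) (s/2) * (starRingEnd ℂ) (Complex.Gamma (s/2)) := by
        have h1 : (1-s)/2 = (starRingEnd ℂ) s/2 + 1 := by rw [hcs]; ring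
        have h2 : (starRingEnd ℂ) s / 2 ≠ 0 := by
          rw [hcj]
          simp only [ne_eq, map_eq_zero]
          exact div_ne_zero hs0 (two_ne_zero' ℂ)
        rw [h1, Complex.Gamma_add_one _ h2, hcj, Complex.Gamma_conj]
      have e2 : Complex.Gamma ((1+s)/2) = (starRingEnd ℂ) (Complex.Gamma ((-s)/2)) := by
        have h1 : (1+s)/2 = (starRingEnd ℂ) ((-s)/2) := by
          rw [map_div₀, map_neg, map_ofNat, hcs]; ring
        rw [h1, Complex.Gamma_conj]
      have h0 : ω 0 = ((2 / r * Complex.normSq (s/2 * Complex.Gamma (s/2)) /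
          Complex.normSq (Complex.Gamma ((-s)/2)) : ℝ) : ℂ) := by
        rw [hω 0]
        push_cast
        rw [show ((0:ℂ)+s)/2 = s/2 by ring, show ((0:ℂ)+1-s)/2 = (1-s)/2 by ring,
          show ((0:ℂ)-s)/2 = (-s)/2 by ring, show ((0:ℂ)+1+s)/2 = (1+s)/2 by ring,
          e1, e2, ← Complex.mul_conj (s/2 * Complex.Gamma (s/2)),
          ← Complex.mul_conj (Complex.Gamma ((-s)/2))]
        simp only [map_mul]
        ring
      rw [h0, Complex.ofReal_re]
      have g1 : 0 < Complex.normSq (s/2 * Complex.Gamma (s/2)) :=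
        Complex.normSq_pos.mpr (mul_ne_zero (div_ne_zero hs0 (two_ne_zero' ℂ)) hz1)
      have g2 : 0 < Complex.normSq (Complex.Gamma ((-s)/2)) := Complex.normSq_pos.mpr hz2
      positivity
  obtain ⟨a, b, ha, hb, hab⟩ :=
    omegaAuxReal r ζ hr hζ (fun k => (ω k).re) hPr hW0
  exact ⟨a, b, ha, hb, hab⟩
end

section
/- The wedge W₁ is causally complete: W₁″ = (W₁′)′ = W₁. -/
/-- The Minkowski form `⟨x,y⟩ = x₀y₀ − x₁y₁ − x₂y₂` on `ℝ³`. -/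
def mink (x y : Fin 3 → ℝ) : ℝ := x 0 * y 0 - x 1 * y 1 - x 2 * y 2

/-- The two-dimensional de Sitter space `dS = {x ∈ ℝ³ : ⟨x,x⟩ = −r²}`. -/
def deSitter (r : ℝ) : Set (Fin 3 → ℝ) := {x | mink x x = -r ^ 2}

/-- Two points are spacelike separated if `⟨x−y, x−y⟩ < 0`. -/
def SpacelikeSep (x y : Fin 3 → ℝ) : Prop := mink (x - y) (x - y) < 0

/-- The causal complement `X′ = {y ∈ dS : y spacelike separated from every x ∈ X}`. -/
def causalCompl (r : ℝ) (X : Set (Fin 3 → ℝ)) : Set (Fin 3 → ℝ) :=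
  {y | y ∈ deSitter r ∧ ∀ x ∈ X, SpacelikeSep x y}

/-- The wedge `W₁ = {x ∈ dS : x₂ > |x₀|}`. -/
def wedge1 (r : ℝ) : Set (Fin 3 → ℝ) := {x | x ∈ deSitter r ∧ |x 0| < x 2}

/-- The rotation `R₀(α)`. -/
noncomputable def rot (α : ℝ) : Matrix (Fin 3) (Fin 3) ℝ :=
  !![1, 0, 0; 0, Real.cos α, -Real.sin α; 0, Real.sin α, Real.cos α]

/-- The boost `Λ₁(t)`. -/
noncomputable def boost (t : ℝ) : Matrix (Fin 3) (Fin 3) ℝ :=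
  !![Real.cosh t, 0, Real.sinh t; 0, 1, 0; Real.sinh t, 0, Real.cosh t]

/-- The Minkowski metric matrix `η = diag(1,−1,−1)`. -/
def minkMatrix : Matrix (Fin 3) (Fin 3) ℝ := !![1, 0, 0; 0, -1, 0; 0, 0, -1]

/-- `SO₀(1,2)`: real 3×3 matrices with `ΛᵀηΛ = η`, `det Λ = 1`, `Λ₀₀ > 0`. -/
def SOplus : Set (Matrix (Fin 3) (Fin 3) ℝ) :=
  {Λ | Λ.transpose * minkMatrix * Λ = minkMatrix ∧ Λ.det = 1 ∧ 0 < Λ 0 0}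

section aux
lemma spacelike_iff' {r : ℝ} {x y : Fin 3 → ℝ} (hx : x ∈ deSitter r) (hy : y ∈ deSitter r) :
    SpacelikeSep x y ↔ -r^2 < mink x y := by
  simp only [deSitter, mink, Set.mem_setOf_eq] at hx hy
  simp only [SpacelikeSep, mink, Pi.sub_apply]
  constructor <;> intro h <;> nlinarith

/-- The closed opposite wedge. -/
def closedOpp (r : ℝ) : Set (Fin 3 → ℝ) :=
  {y | y ∈ deSitter r ∧ y 2 + y 0 ≤ 0 ∧ y 2 - y 0 ≤ 0}

/-- boosted point in the wedge -/
noncomputable def bpt (r M : ℝ) : Fin 3 → ℝ := ![r*(M - M⁻¹)/2, 0, r*(M + M⁻¹)/2]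
/-- boosted point in the opposite wedge -/
noncomputable def npt (r M : ℝ) : Fin 3 → ℝ := ![r*(M⁻¹ - M)/2, 0, -(r*(M + M⁻¹)/2)]

lemma bpt_mem (r M : ℝ) (hr : 0 < r) (hM : 0 < M) : bpt r M ∈ wedge1 r := by
  have hM' : M ≠ 0 := ne_of_gt hM
  have hMi : 0 < M⁻¹ := inv_pos.2 hM
  constructor
  · simp only [deSitter, mink, bpt, Set.mem_setOf_eq, Matrix.cons_val_zero, Matrix.cons_val_one,
      Matrix.head_cons, Matrix.cons_val_two, Matrix.tail_cons]
    field_simp; ring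
  · simp only [bpt, Matrix.cons_val_zero, Matrix.cons_val_two, Matrix.tail_cons, Matrix.head_cons]
    rw [abs_lt]
    constructor <;> nlinarith [mul_pos hr hM, mul_pos hr hMi]

lemma npt_mem (r M : ℝ) (hr : 0 < r) (hM : 0 < M) : npt r M ∈ closedOpp r := by
  have hM' : M ≠ 0 := ne_of_gt hM
  have hMi : 0 < M⁻¹ := inv_pos.2 hM
  refine ⟨?_, ?_, ?_⟩
  · simp only [deSitter, mink, npt, Set.mem_setOf_eq, Matrix.cons_val_zero, Matrix.cons_val_one,
      Matrix.head_cons, Matrix.cons_val_two, Matrix.tail_cons]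
    field_simp; ring
  all_goals
    simp only [npt, Matrix.cons_val_zero, Matrix.cons_val_two, Matrix.tail_cons, Matrix.head_cons]
    nlinarith [mul_pos hr hM, mul_pos hr hMi]

lemma ept_mem (r : ℝ) (hr : 0 < r) (s : ℝ) (hs : s = r ∨ s = -r) :
    (![0, s, 0] : Fin 3 → ℝ) ∈ closedOpp r := by
  refine ⟨?_, ?_, ?_⟩ <;>
    simp only [deSitter, mink, Set.mem_setOf_eq, Matrix.cons_val_zero, Matrix.cons_val_one,
      Matrix.head_cons, Matrix.cons_val_two, Matrix.tail_cons] <;>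
  rcases hs with h | h <;> simp [h] <;> ring

lemma compl_wedge : ∀ (r : ℝ), 0 < r → causalCompl r (wedge1 r) = closedOpp r := by
  intro r hr
  ext y
  constructor
  · rintro ⟨hy, h⟩
    refine ⟨hy, ?_, ?_⟩
    · -- p = y2 + y0 ≤ 0, use bpt r M⁻¹ with large M
      by_contra hp
      push_neg at hp
      obtain ⟨M, hM1, hMp⟩ : ∃ M : ℝ, 1 ≤ M ∧ 2*r + |y 2 - y 0| ≤ M * (y 2 + y 0) := by
        refine ⟨max 1 ((2*r + |y 2 - y 0|)/(y 2 + y 0)), le_max_left _ _, ?_⟩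
        rw [← div_le_iff₀ hp]
        exact le_max_right _ _
      have hM0 : 0 < M := lt_of_lt_of_le one_pos hM1
      have hMi1 : M⁻¹ ≤ 1 := by rw [inv_le_one_iff₀]; right; exact hM1
      have hMi0 : 0 < M⁻¹ := inv_pos.2 hM0
      have hMq : -|y 2 - y 0| ≤ M⁻¹ * (y 2 - y 0) := by
        have h1 : |M⁻¹ * (y 2 - y 0)| ≤ |y 2 - y 0| := by
          rw [abs_mul, abs_of_pos hMi0]
          nlinarith [abs_nonneg (y 2 - y 0)]
        nlinarith [neg_abs_le (M⁻¹ * (y 2 - y 0))]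
      have hsp := (spacelike_iff' (bpt_mem r M⁻¹ hr hMi0).1 hy).1 (h _ (bpt_mem r M⁻¹ hr hMi0))
      simp only [mink, bpt, Matrix.cons_val_zero, Matrix.cons_val_one, Matrix.head_cons,
        Matrix.cons_val_two, Matrix.tail_cons, inv_inv] at hsp
      have e1 := mul_le_mul_of_nonneg_left hMp (le_of_lt hr)
      have e2 := mul_le_mul_of_nonneg_left hMq (le_of_lt hr)
      nlinarith [e1, e2, hsp, mul_pos hr hr]
    · by_contra hq
      push_neg at hq
      obtain ⟨M, hM1, hMq⟩ : ∃ M : ℝ, 1 ≤ M ∧ 2*r + |y 2 + y 0| ≤ M * (y 2 - y 0) := by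
        refine ⟨max 1 ((2*r + |y 2 + y 0|)/(y 2 - y 0)), le_max_left _ _, ?_⟩
        rw [← div_le_iff₀ hq]
        exact le_max_right _ _
      have hM0 : 0 < M := lt_of_lt_of_le one_pos hM1
      have hMi1 : M⁻¹ ≤ 1 := by rw [inv_le_one_iff₀]; right; exact hM1
      have hMi0 : 0 < M⁻¹ := inv_pos.2 hM0
      have hMp : -|y 2 + y 0| ≤ M⁻¹ * (y 2 + y 0) := by
        have h1 : |M⁻¹ * (y 2 + y 0)| ≤ |y 2 + y 0| := by
          rw [abs_mul, abs_of_pos hMi0]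
          nlinarith [abs_nonneg (y 2 + y 0)]
        nlinarith [neg_abs_le (M⁻¹ * (y 2 + y 0))]
      have hsp := (spacelike_iff' (bpt_mem r M hr hM0).1 hy).1 (h _ (bpt_mem r M hr hM0))
      simp only [mink, bpt, Matrix.cons_val_zero, Matrix.cons_val_one, Matrix.head_cons,
        Matrix.cons_val_two, Matrix.tail_cons] at hsp
      have e1 := mul_le_mul_of_nonneg_left hMq (le_of_lt hr)
      have e2 := mul_le_mul_of_nonneg_left hMp (le_of_lt hr)
      nlinarith [e1, e2, hsp, mul_pos hr hr]
  · rintro ⟨hy, hp, hq⟩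
    refine ⟨hy, fun x hx => ?_⟩
    rw [spacelike_iff' hx.1 hy]
    have hds := hx.1
    rcases abs_lt.1 hx.2 with ⟨h1, h2⟩
    simp only [deSitter, mink, Set.mem_setOf_eq] at hds hy
    simp only [mink]
    nlinarith [sq_nonneg (x 1 - y 1),
      mul_pos (show (0:ℝ) < (x 2 + x 0) - (y 2 + y 0) by linarith)
        (show (0:ℝ) < (x 2 - x 0) - (y 2 - y 0) by linarith)]

lemma compl_opp : ∀ (r : ℝ), 0 < r → causalCompl r (closedOpp r) = wedge1 r := by
  intro r hr
  ext y
  constructor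
  · rintro ⟨hy, h⟩
    refine ⟨hy, ?_⟩
    have hds := hy
    simp only [deSitter, mink, Set.mem_setOf_eq] at hds
    have h1 := (spacelike_iff' (ept_mem r hr r (Or.inl rfl)).1 hy).1 (h _ (ept_mem r hr r (Or.inl rfl)))
    have h2 := (spacelike_iff' (ept_mem r hr (-r) (Or.inr rfl)).1 hy).1 (h _ (ept_mem r hr (-r) (Or.inr rfl)))
    simp only [mink, Matrix.cons_val_zero, Matrix.cons_val_one, Matrix.head_cons,
      Matrix.cons_val_two, Matrix.tail_cons] at h1 h2
    have hy1 : y 1 ^ 2 < r ^ 2 := by nlinarith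
    have hpq : 0 < (y 2 + y 0) * (y 2 - y 0) := by nlinarith
    have hq0 : 0 < y 2 - y 0 := by
      by_contra hq
      push_neg at hq
      have hqneg : y 2 - y 0 < 0 :=
        lt_of_le_of_ne hq (by intro h'; rw [h'] at hpq; simp at hpq)
      have hpneg : y 2 + y 0 < 0 := by nlinarith
      obtain ⟨M, hM1, hMq⟩ : ∃ M : ℝ, 1 ≤ M ∧ 2*r + |y 2 + y 0| ≤ M * (-(y 2 - y 0)) := by
        refine ⟨max 1 ((2*r + |y 2 + y 0|)/(-(y 2 - y 0))), le_max_left _ _, ?_⟩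
        rw [← div_le_iff₀ (by linarith : (0:ℝ) < -(y 2 - y 0))]
        exact le_max_right _ _
      have hM0 : 0 < M := lt_of_lt_of_le one_pos hM1
      have hMi1 : M⁻¹ ≤ 1 := by rw [inv_le_one_iff₀]; right; exact hM1
      have hMi0 : 0 < M⁻¹ := inv_pos.2 hM0
      have hMp : M⁻¹ * (y 2 + y 0) ≤ |y 2 + y 0| := by
        have h1 : |M⁻¹ * (y 2 + y 0)| ≤ |y 2 + y 0| := by
          rw [abs_mul, abs_of_pos hMi0]
          nlinarith [abs_nonneg (y 2 + y 0)]
        nlinarith [le_abs_self (M⁻¹ * (y 2 + y 0))]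
      have hsp := (spacelike_iff' (npt_mem r M hr hM0).1 hy).1 (h _ (npt_mem r M hr hM0))
      simp only [mink, npt, Matrix.cons_val_zero, Matrix.cons_val_one, Matrix.head_cons,
        Matrix.cons_val_two, Matrix.tail_cons] at hsp
      have e1 := mul_le_mul_of_nonneg_left hMq (le_of_lt hr)
      have e2 := mul_le_mul_of_nonneg_left hMp (le_of_lt hr)
      nlinarith [e1, e2, hsp, mul_pos hr hr]
    have hp0 : 0 < y 2 + y 0 := by nlinarith
    rw [abs_lt]
    constructor <;> linarith
  · rintro ⟨hy, hw⟩
    refine ⟨hy, fun z hz => ?_⟩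
    rw [spacelike_iff' hz.1 hy]
    obtain ⟨hzds, hz1, hz2⟩ := hz
    rcases abs_lt.1 hw with ⟨h1, h2⟩
    simp only [deSitter, mink, Set.mem_setOf_eq] at hzds hy
    simp only [mink]
    nlinarith [sq_nonneg (z 1 - y 1),
      mul_pos_of_neg_of_neg (show (z 2 + z 0) - (y 2 + y 0) < 0 by linarith)
        (show (z 2 - z 0) - (y 2 - y 0) < 0 by linarith)]

end aux

/-- The wedge `W₁` is causally complete: `W₁″ = (W₁′)′ = W₁`. -/
theorem wedge_causally_complete (r : ℝ) (hr : 0 < r) :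
    causalCompl r (causalCompl r (wedge1 r)) = wedge1 r := by
  rw [compl_wedge r hr, compl_opp r hr]
end

section
/- For a matrix Λ ∈ SO₀(1,2), the wedge is mapped into itself, Λ·W₁ ⊆ W₁, if and only if Λ = Λ₁(t) for some t ∈ ℝ. In particular, the only elements of SO₀(1,2) leaving W₁ invariant are the boosts Λ₁(t). -/
/-! A boost acts on the light-cone coordinates `x₂ ± x₀` by the factors `e^{±t}`, so it preserves
`W₁`. Conversely, if `Λ` preserves `W₁`, test it on the boost orbit `r (sinh u, 0, cosh u)` of the
apex `(0, 0, r)`: the functionals `x ↦ (Λx)₂ ∓ (Λx)₀` stay positive along this whole hyperbola.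
Since `Λ η Λᵀ = η`, they are given by the lightlike vectors `Λ₂ ∓ Λ₀`, and positivity along the
hyperbola forces their middle entries to vanish. The Lorentz relations among the rows, together
with `det Λ = 1` and `Λ₀₀ > 0`, then leave only the boosts. -/

open Real Set Matrix Filter Topology

theorem Matrix.mul_mul_transpose_eq_of_transpose_mul_mul_eq {n R : Type*} [Fintype n]
    [DecidableEq n] [CommRing R] {A η : Matrix n n R} (hη : η * η = 1) (h : Aᵀ * η * A = η) :
    A * η * Aᵀ = η := by
  have hinv : (η * Aᵀ * η) * A = 1 := by
    rw [Matrix.mul_assoc, Matrix.mul_assoc, ← Matrix.mul_assoc Aᵀ, h, hη]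
  calc A * η * Aᵀ = A * (η * Aᵀ * η) * η := by
        simp only [Matrix.mul_assoc, hη, Matrix.mul_one]
    _ = η := by rw [mul_eq_one_comm.mp hinv, Matrix.one_mul]

lemma minkMatrix_mul_self : minkMatrix * minkMatrix = 1 := by
  rw [minkMatrix, Matrix.mul_fin_three, Matrix.one_fin_three]; norm_num

lemma mul_minkMatrix_mul_transpose_apply (Λ : Matrix (Fin 3) (Fin 3) ℝ) (i j : Fin 3) :
    (Λ * minkMatrix * Λᵀ) i j = mink (Λ i) (Λ j) := by
  simp only [Matrix.mul_apply, Fin.sum_univ_three, transpose_apply, minkMatrix, mink, of_apply,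
    cons_val', cons_val_zero, cons_val_one, cons_val, cons_val_fin_one]
  ring

lemma mem_wedge1_iff {r : ℝ} {x : Fin 3 → ℝ} :
    x ∈ wedge1 r ↔ mink x x = -r ^ 2 ∧ 0 < x 2 - x 0 ∧ 0 < x 2 + x 0 := by
  simp only [wedge1, deSitter, mem_ofPred_eq, abs_lt]
  constructor <;> rintro ⟨h, h₁, h₂⟩ <;> exact ⟨h, by linarith, by linarith⟩

lemma boost_mulVec (t : ℝ) (x : Fin 3 → ℝ) :
    boost t *ᵥ x = ![cosh t * x 0 + sinh t * x 2, x 1, sinh t * x 0 + cosh t * x 2] := by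
  ext i
  fin_cases i <;> simp [boost, Matrix.mulVec, dotProduct, Fin.sum_univ_three]

lemma mink_boost_mulVec (t : ℝ) (x : Fin 3 → ℝ) :
    mink (boost t *ᵥ x) (boost t *ᵥ x) = mink x x := by
  simp only [boost_mulVec, mink, cons_val_zero, cons_val_one, cons_val]
  linear_combination (x 0 ^ 2 - x 2 ^ 2) * cosh_sq_sub_sinh_sq t

lemma boost_mapsTo_wedge1 (r t : ℝ) : MapsTo (boost t *ᵥ ·) (wedge1 r) (wedge1 r) := by
  intro x hx
  rw [mem_wedge1_iff] at hx ⊢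
  obtain ⟨hdS, hsub, hadd⟩ := hx
  refine ⟨by rw [mink_boost_mulVec, hdS], ?_, ?_⟩
  · have : (boost t *ᵥ x) 2 - (boost t *ᵥ x) 0 = exp (-t) * (x 2 - x 0) := by
      simp only [boost_mulVec, cons_val_zero, cons_val, ← cosh_sub_sinh]; ring
    rw [this]; positivity
  · have : (boost t *ᵥ x) 2 + (boost t *ᵥ x) 0 = exp t * (x 2 + x 0) := by
      simp only [boost_mulVec, cons_val_zero, cons_val, ← cosh_add_sinh]; ring
    rw [this]; positivity

lemma apex_mem_wedge1 {r : ℝ} (hr : 0 < r) : ![0, 0, r] ∈ wedge1 r := by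
  simp [wedge1, deSitter, mink, hr, sq]

lemma mulVec_boost_apex_apply (Λ : Matrix (Fin 3) (Fin 3) ℝ) (r u : ℝ) (i : Fin 3) :
    (Λ *ᵥ (boost u *ᵥ ![0, 0, r])) i = r * (Λ i 0 * sinh u + Λ i 2 * cosh u) := by
  rw [boost_mulVec]
  simp only [mulVec, dotProduct, Fin.sum_univ_three, cons_val_zero, cons_val_one, cons_val]
  ring

lemma nonneg_of_forall_pos_mul_exp_add_mul_exp_neg {α β : ℝ}
    (h : ∀ u, 0 < α * exp u + β * exp (-u)) : 0 ≤ α := by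
  have hlim : Tendsto (fun u => α + β * exp (-u) ^ 2) atTop (𝓝 (α + β * 0 ^ 2)) :=
    ((tendsto_exp_neg_atTop_nhds_zero.pow 2).const_mul β).const_add α
  refine ge_of_tendsto' (by simpa using hlim) fun u => ?_
  have : α + β * exp (-u) ^ 2 = exp (-u) * (α * exp u + β * exp (-u)) := by
    rw [exp_neg]; field_simp
  rw [this]
  exact (mul_pos (exp_pos _) (h u)).le

lemma abs_le_of_forall_pos_mul_sinh_add_mul_cosh {a c : ℝ}
    (h : ∀ u, 0 < a * sinh u + c * cosh u) : |a| ≤ c := by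
  have key : ∀ u, a * sinh u + c * cosh u = ((c + a) * exp u + (c - a) * exp (-u)) / 2 := by
    intro u; rw [sinh_eq, cosh_eq]; ring
  have hadd : 0 ≤ c + a :=
    nonneg_of_forall_pos_mul_exp_add_mul_exp_neg (β := c - a) fun u => by
    linarith [h u, key u]
  have hsub : 0 ≤ c - a :=
    nonneg_of_forall_pos_mul_exp_add_mul_exp_neg (β := c + a) fun u => by
    have := key (-u); rw [neg_neg] at this; linarith [h (-u)]
  exact abs_le.2 ⟨by linarith, by linarith⟩

lemma apply_one_eq_zero_of_lightlike {v : Fin 3 → ℝ} (hv : mink v v = 0)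
    (h : ∀ u, 0 < v 0 * sinh u + v 2 * cosh u) : v 1 = 0 := by
  have hle := abs_le_of_forall_pos_mul_sinh_add_mul_cosh h
  unfold mink at hv
  nlinarith [sq_abs (v 0), abs_nonneg (v 0), sq_nonneg (v 1)]

lemma mink_row_row {Λ : Matrix (Fin 3) (Fin 3) ℝ} (hη : Λ * minkMatrix * Λᵀ = minkMatrix)
    (i j : Fin 3) : mink (Λ i) (Λ j) = minkMatrix i j := by
  rw [← mul_minkMatrix_mul_transpose_apply, hη]

lemma entries_of_mapsTo_wedge1 {r : ℝ} (hr : 0 < r) {Λ : Matrix (Fin 3) (Fin 3) ℝ}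
    (hη : Λ * minkMatrix * Λᵀ = minkMatrix) (hW : MapsTo (Λ *ᵥ ·) (wedge1 r) (wedge1 r)) :
    Λ 0 1 = 0 ∧ Λ 2 1 = 0 ∧ 0 < Λ 2 2 := by
  have h00 := mink_row_row hη 0 0
  have h22 := mink_row_row hη 2 2
  have h02 := mink_row_row hη 0 2
  simp only [mink, minkMatrix, of_apply, cons_val', cons_val_zero, cons_val_one, cons_val,
    cons_val_fin_one] at h00 h22 h02
  have hpos : ∀ u, 0 < (Λ 2 - Λ 0) 0 * sinh u + (Λ 2 - Λ 0) 2 * cosh u ∧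
      0 < (Λ 2 + Λ 0) 0 * sinh u + (Λ 2 + Λ 0) 2 * cosh u := by
    intro u
    obtain ⟨-, hsub, hadd⟩ :=
      mem_wedge1_iff.1 (hW (boost_mapsTo_wedge1 r u (apex_mem_wedge1 hr)))
    simp only [mulVec_boost_apex_apply] at hsub hadd
    exact ⟨pos_of_mul_pos_right (a := r) (by simp only [Pi.sub_apply]; linarith) hr.le,
      pos_of_mul_pos_right (a := r) (by simp only [Pi.add_apply]; linarith) hr.le⟩
  have hsub := apply_one_eq_zero_of_lightlike (v := Λ 2 - Λ 0)
    (by simp only [mink, Pi.sub_apply]; linear_combination h22 + h00 - 2 * h02)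
    fun u => (hpos u).1
  have hadd := apply_one_eq_zero_of_lightlike (v := Λ 2 + Λ 0)
    (by simp only [mink, Pi.add_apply]; linear_combination h22 + h00 + 2 * h02)
    fun u => (hpos u).2
  obtain ⟨hsub₀, hadd₀⟩ := hpos 0
  simp only [Pi.sub_apply, Pi.add_apply, sinh_zero, cosh_zero] at hsub hadd hsub₀ hadd₀
  exact ⟨by linarith, by linarith, by linarith⟩

lemma exists_eq_boost_of_entries {Λ : Matrix (Fin 3) (Fin 3) ℝ}
    (hη : Λ * minkMatrix * Λᵀ = minkMatrix) (hdet : Λ.det = 1) (h00 : 0 < Λ 0 0)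
    (h22 : 0 < Λ 2 2) (h01 : Λ 0 1 = 0) (h21 : Λ 2 1 = 0) : ∃ t, Λ = boost t := by
  have r00 := mink_row_row hη 0 0
  have r22 := mink_row_row hη 2 2
  have r02 := mink_row_row hη 0 2
  have r01 := mink_row_row hη 0 1
  have r21 := mink_row_row hη 2 1
  simp only [mink, minkMatrix, of_apply, cons_val', cons_val_zero, cons_val_one, cons_val,
    cons_val_fin_one, h01, h21, mul_zero, sub_zero] at r00 r22 r02 r01 r21
  have hd : Λ 2 2 = Λ 0 0 := by
    have : Λ 2 2 ^ 2 = Λ 0 0 ^ 2 := by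
      linear_combination (Λ 0 0 * Λ 2 0 + Λ 0 2 * Λ 2 2) * r02 - Λ 0 0 ^ 2 * r22
        - Λ 2 2 ^ 2 * r00
    nlinarith
  have hc : Λ 2 0 = Λ 0 2 :=
    mul_left_cancel₀ h00.ne' (by linear_combination r02 + Λ 0 2 * hd)
  rw [hd, hc] at r21
  have he : Λ 1 0 = 0 := by linear_combination Λ 0 0 * r01 - Λ 0 2 * r21 - Λ 1 0 * r00
  have hg : Λ 1 2 = 0 := by linear_combination Λ 0 2 * r01 - Λ 0 0 * r21 - Λ 1 2 * r00
  have hf : Λ 1 1 = 1 := by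
    rw [Matrix.det_fin_three, h01, h21, he, hg, hd, hc] at hdet
    linear_combination hdet - Λ 1 1 * r00
  have ha : Λ 0 0 = cosh (arsinh (Λ 0 2)) := by
    rw [cosh_arsinh, show 1 + Λ 0 2 ^ 2 = Λ 0 0 ^ 2 by linarith, sqrt_sq h00.le]
  refine ⟨arsinh (Λ 0 2), ?_⟩
  ext i j
  fin_cases i <;> fin_cases j <;> simp [boost, sinh_arsinh, ha, h01, h21, he, hf, hg, hd, hc]

/-- For `Λ ∈ SO₀(1,2)`, the wedge is mapped into itself, `Λ·W₁ ⊆ W₁`, if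
and only if `Λ = Λ₁(t)` for some `t ∈ ℝ`. In particular, the only elements of
`SO₀(1,2)` leaving `W₁` invariant are the boosts `Λ₁(t)`. -/
theorem wedge_stabilizer_is_boosts (r : ℝ) (hr : 0 < r)
    (Λ : Matrix (Fin 3) (Fin 3) ℝ) (hΛ : Λ ∈ SOplus) :
    (fun x => Λ.mulVec x) '' wedge1 r ⊆ wedge1 r ↔ ∃ t : ℝ, Λ = boost t := by
  obtain ⟨hη, hdet, h00⟩ := hΛ
  rw [← mapsTo_iff_image_subset]
  constructor
  · intro hW
    have hη' := mul_mul_transpose_eq_of_transpose_mul_mul_eq minkMatrix_mul_self hη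
    obtain ⟨h01, h21, h22⟩ := entries_of_mapsTo_wedge1 hr hη' hW
    exact exists_eq_boost_of_entries hη' hdet h00 h22 h01 h21
  · rintro ⟨t, rfl⟩
    exact boost_mapsTo_wedge1 r t
end

section
/- Let γ ∈ ℝ and θ ∈ (0, π/2], and let I = {(0, r·sin ψ, r·cos ψ) : γ − θ < ψ < γ + θ} be an open arc on the time-zero circle of dS of length 2θr ≤ πr. Then the causal completion of I is the intersection of two wedges whose edges lie on the time-zero circle: I″ = R₀(θ − γ − π/2)·W₁ ∩ R₀(π/2 − γ − θ)·W₁. -/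
open Real

lemma mink_self_sub (x y : Fin 3 → ℝ) :
    mink (x - y) (x - y) = mink x x - 2 * mink x y + mink y y := by
  simp only [mink, Pi.sub_apply]; ring

lemma mink_comm (x y : Fin 3 → ℝ) : mink x y = mink y x := by
  simp only [mink]; ring

lemma sl_iff {r : ℝ} {x y : Fin 3 → ℝ} (hx : x ∈ deSitter r) (hy : y ∈ deSitter r) :
    SpacelikeSep x y ↔ -r ^ 2 < mink x y := by
  have hx' : mink x x = -r ^ 2 := hx
  have hy' : mink y y = -r ^ 2 := hy
  unfold SpacelikeSep
  rw [mink_self_sub, hx', hy']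
  constructor <;> intro h <;> linarith

lemma dS_eq {r : ℝ} {z : Fin 3 → ℝ} (hz : z ∈ deSitter r) :
    z 1 ^ 2 + z 2 ^ 2 = r ^ 2 + z 0 ^ 2 := by
  have h : mink z z = -r ^ 2 := hz
  unfold mink at h
  linear_combination -h

lemma exists_angle {c x y : ℝ} (hc : 0 < c) (h : x ^ 2 + y ^ 2 = c ^ 2) :
    ∃ χ, x = c * Real.sin χ ∧ y = c * Real.cos χ := by
  have hc0 : c ≠ 0 := ne_of_gt hc
  have hy1 : -1 ≤ y / c := by
    rw [neg_le, ← neg_div, div_le_one hc]; nlinarith [sq_nonneg x, sq_nonneg (y + c)]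
  have hy2 : y / c ≤ 1 := by
    rw [div_le_one hc]; nlinarith [sq_nonneg x, sq_nonneg (y - c)]
  have hsq : 1 - (y / c) ^ 2 = (|x| / c) ^ 2 := by
    rw [div_pow, div_pow, sq_abs]; field_simp; linarith
  have hsin : Real.sin (Real.arccos (y / c)) = |x| / c := by
    rw [Real.sin_arccos, hsq, Real.sqrt_sq (by positivity)]
  have hcos : Real.cos (Real.arccos (y / c)) = y / c := Real.cos_arccos hy1 hy2
  by_cases hx : 0 ≤ x
  · refine ⟨Real.arccos (y / c), ?_, ?_⟩
    · rw [hsin, abs_of_nonneg hx]; field_simp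
    · rw [hcos]; field_simp
  · refine ⟨-Real.arccos (y / c), ?_, ?_⟩
    · rw [Real.sin_neg, hsin, abs_of_neg (lt_of_not_ge hx)]; field_simp
    · rw [Real.cos_neg, hcos]; field_simp

/-- Forward wedge spacelike separation. -/
lemma wedge_forward {r α : ℝ} (hr : 0 < r) {z y : Fin 3 → ℝ}
    (hz : z ∈ deSitter r) (hy : y ∈ deSitter r)
    (hzw : |z 0| < Real.cos α * z 1 - Real.sin α * z 2)
    (hyw : Real.cos α * y 1 - Real.sin α * y 2 ≤ -|y 0|) :
    -r ^ 2 < mink z y := by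
  have hcs : Real.sin α ^ 2 + Real.cos α ^ 2 = 1 := Real.sin_sq_add_cos_sq α
  set c := Real.cos α with hc
  set s := Real.sin α with hs
  set Lz := c * z 1 - s * z 2 with hLz
  set Mz := s * z 1 + c * z 2 with hMz
  set Ly := c * y 1 - s * y 2 with hLy
  set My := s * y 1 + c * y 2 with hMy
  have hzd := dS_eq hz
  have hyd := dS_eq hy
  have hLMz : Lz ^ 2 + Mz ^ 2 = z 1 ^ 2 + z 2 ^ 2 := by
    rw [hLz, hMz]; linear_combination (z 1 ^ 2 + z 2 ^ 2) * hcs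
  have hLMy : Ly ^ 2 + My ^ 2 = y 1 ^ 2 + y 2 ^ 2 := by
    rw [hLy, hMy]; linear_combination (y 1 ^ 2 + y 2 ^ 2) * hcs
  have hexp : mink z y = z 0 * y 0 - (Lz * Ly + Mz * My) := by
    unfold mink; rw [hLz, hMz, hLy, hMy]
    linear_combination (z 1 * y 1 + z 2 * y 2) * hcs
  have hz0 : z 0 ^ 2 < Lz ^ 2 := by
    have h := sq_lt_sq' (by linarith [abs_nonneg (z 0)] : -Lz < |z 0|) hzw
    rwa [sq_abs] at h
  have hy0 : y 0 ^ 2 ≤ Ly ^ 2 := by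
    have h1 : |y 0| ≤ -Ly := by linarith
    have h2 := pow_le_pow_left₀ (abs_nonneg (y 0)) h1 2
    rw [sq_abs] at h2
    calc y 0 ^ 2 ≤ (-Ly) ^ 2 := h2
    _ = Ly ^ 2 := by ring
  have hMz2 : Mz ^ 2 < r ^ 2 := by linarith
  have hMy2 : My ^ 2 ≤ r ^ 2 := by linarith
  have h1 : Mz * My < r ^ 2 := by nlinarith [sq_nonneg (Mz - My), sq_nonneg (Mz + My)]
  have h2 : |z 0| * |y 0| ≤ Lz * (-Ly) := by
    apply mul_le_mul hzw.le (by linarith) (abs_nonneg _)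
    exact le_trans (abs_nonneg _) hzw.le
  rw [mul_neg] at h2
  have h3 : -(|z 0| * |y 0|) ≤ z 0 * y 0 := by
    rw [← abs_mul]; exact neg_abs_le _
  rw [hexp]; linarith

/-- Reverse: non-member of the wedge is non-spacelike to some point of the opposite wedge. -/
lemma wedge_reverse {r α : ℝ} (hr : 0 < r) {z : Fin 3 → ℝ} (hz : z ∈ deSitter r)
    (hcond : Real.cos α * z 1 - Real.sin α * z 2 ≤ |z 0|) :
    ∃ y, y ∈ deSitter r ∧ (Real.cos α * y 1 - Real.sin α * y 2 ≤ -|y 0|) ∧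
      mink y z ≤ -r ^ 2 := by
  have hcs : Real.sin α ^ 2 + Real.cos α ^ 2 = 1 := Real.sin_sq_add_cos_sq α
  set c := Real.cos α with hc
  set s := Real.sin α with hs
  set Lz := c * z 1 - s * z 2 with hLz
  set Mz := s * z 1 + c * z 2 with hMz
  by_cases h1 : Lz ≤ -|z 0|
  · refine ⟨z, hz, h1, le_of_eq hz⟩
  · push_neg at h1
    have hzd := dS_eq hz
    have hLMz : Lz ^ 2 + Mz ^ 2 = z 1 ^ 2 + z 2 ^ 2 := by
      rw [hLz, hMz]; linear_combination (z 1 ^ 2 + z 2 ^ 2) * hcs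
    have hL2 : Lz ^ 2 ≤ z 0 ^ 2 := by
      have h := sq_le_sq' (le_of_lt h1) hcond
      rwa [sq_abs] at h
    have hM2 : r ^ 2 ≤ Mz ^ 2 := by nlinarith
    set e : ℝ := if 0 ≤ Mz then 1 else -1 with he
    have he2 : e ^ 2 = 1 := by rw [he]; split <;> norm_num
    have heM : e * Mz = |Mz| := by
      rw [he]; split
      · rw [abs_of_nonneg (by assumption)]; ring
      · rw [abs_of_neg (by linarith [lt_of_not_ge (by assumption)])]; ring
    refine ⟨![0, e * (r * s), e * (r * c)], ?_, ?_, ?_⟩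
    · show mink _ _ = -r ^ 2
      unfold mink
      simp only [Matrix.cons_val_zero, Matrix.cons_val_one, Matrix.head_cons,
        Matrix.cons_val_two, Matrix.tail_cons]
      linear_combination (-(e ^ 2) * r ^ 2) * hcs + (-(r ^ 2)) * he2
    · simp only [Matrix.cons_val_zero, Matrix.cons_val_one, Matrix.head_cons,
        Matrix.cons_val_two, Matrix.tail_cons, abs_zero, neg_zero]
      have : c * (e * (r * s)) - s * (e * (r * c)) = 0 := by ring
      rw [this]
    · unfold mink
      simp only [Matrix.cons_val_zero, Matrix.cons_val_one, Matrix.head_cons,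
        Matrix.cons_val_two, Matrix.tail_cons]
      have hMabs : r ≤ |Mz| := by
        have := abs_nonneg Mz
        nlinarith [sq_abs Mz]
      have key : 0 * z 0 - e * (r * s) * z 1 - e * (r * c) * z 2 = -(r * (e * Mz)) := by
        rw [hMz]; ring
      rw [key, heM]
      nlinarith

/-- Rotation expansion identity. -/
lemma rot_expand (α ψ u v : ℝ) :
    u * Real.sin ψ + v * Real.cos ψ =
      (Real.sin α * u + Real.cos α * v) * Real.cos (ψ - α) +
        (Real.cos α * u - Real.sin α * v) * Real.sin (ψ - α) := by
  rw [Real.cos_sub, Real.sin_sub]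
  linear_combination (-(u * Real.sin ψ) - v * Real.cos ψ) * (Real.sin_sq_add_cos_sq α)

/-- A point of the dual wedge is "behind" every arc direction. -/
lemma wm_arc {r α : ℝ} (hr : 0 < r) {y : Fin 3 → ℝ} (hy : y ∈ deSitter r)
    (hyw : Real.cos α * y 1 - Real.sin α * y 2 ≤ -|y 0|)
    {ψ : ℝ} (hs : 0 < Real.sin (ψ - α)) :
    y 1 * Real.sin ψ + y 2 * Real.cos ψ < r := by
  have hcs : Real.sin α ^ 2 + Real.cos α ^ 2 = 1 := Real.sin_sq_add_cos_sq α
  have hcs2 : Real.sin (ψ - α) ^ 2 + Real.cos (ψ - α) ^ 2 = 1 := Real.sin_sq_add_cos_sq _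
  have hexp := rot_expand α ψ (y 1) (y 2)
  set c := Real.cos α with hc
  set s := Real.sin α with hsd
  set L := c * y 1 - s * y 2 with hL
  set M := s * y 1 + c * y 2 with hM
  set S := Real.sin (ψ - α) with hS
  set C := Real.cos (ψ - α) with hC
  have hyd := dS_eq hy
  have hLM : L ^ 2 + M ^ 2 = y 1 ^ 2 + y 2 ^ 2 := by
    rw [hL, hM]; linear_combination (y 1 ^ 2 + y 2 ^ 2) * hcs
  have hy02 : y 0 ^ 2 ≤ L ^ 2 := by
    have h1 : |y 0| ≤ -L := by linarith
    have h2 := pow_le_pow_left₀ (abs_nonneg (y 0)) h1 2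
    rw [sq_abs] at h2
    calc y 0 ^ 2 ≤ (-L) ^ 2 := h2
    _ = L ^ 2 := by ring
  have habs : 0 ≤ |y 0| := abs_nonneg _
  have hM2 : M ^ 2 = r ^ 2 + y 0 ^ 2 - L ^ 2 := by linarith
  have hcs2' : r ^ 2 * S ^ 2 + r ^ 2 * C ^ 2 = r ^ 2 := by linear_combination r ^ 2 * hcs2
  have e1 : 2 * r * (M * C) ≤ M ^ 2 + r ^ 2 * C ^ 2 := by nlinarith [sq_nonneg (M - r * C)]
  have e2 : 0 ≤ 2 * r * S * (-L - |y 0|) := mul_nonneg (by positivity) (by linarith)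
  have e3 : 0 < r ^ 2 * S ^ 2 := by positivity
  have e4 : 0 ≤ 2 * r * S * |y 0| := by positivity
  have key : 0 < 2 * r * (r - (M * C + L * S)) := by linarith
  rcases mul_pos_iff.mp key with ⟨-, hfin⟩ | ⟨hneg, -⟩
  · rw [hexp]; linarith
  · linarith

set_option maxHeartbeats 1000000 in
/-- Main inequality: every point of the double cone is spacelike to every point
spacelike to the whole arc. -/
lemma main_ineq {r a b : ℝ} (hr : 0 < r) (hab : a < b) (hba : b - a ≤ Real.pi)
    {z y : Fin 3 → ℝ} (hz : z ∈ deSitter r) (hy : y ∈ deSitter r)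
    (hza : |z 0| < Real.cos a * z 1 - Real.sin a * z 2)
    (hzb : |z 0| < Real.sin b * z 2 - Real.cos b * z 1)
    (hyI : ∀ ψ ∈ Set.Ioo a b, y 1 * Real.sin ψ + y 2 * Real.cos ψ < r) :
    -r ^ 2 < mink z y := by
  have hπ := Real.pi_pos
  have h2π : (0:ℝ) < 2 * Real.pi := by linarith
  -- radial coordinates
  set σ := Real.sqrt (r ^ 2 + z 0 ^ 2) with hσdef
  have hσpos : 0 < σ := Real.sqrt_pos.mpr (by positivity)
  have hσ2 : σ ^ 2 = r ^ 2 + z 0 ^ 2 := Real.sq_sqrt (by positivity)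
  set ρ := Real.sqrt (r ^ 2 + y 0 ^ 2) with hρdef
  have hρpos : 0 < ρ := Real.sqrt_pos.mpr (by positivity)
  have hρ2 : ρ ^ 2 = r ^ 2 + y 0 ^ 2 := Real.sq_sqrt (by positivity)
  obtain ⟨χz, hz1, hz2⟩ := exists_angle (x := z 1) (y := z 2) hσpos (by rw [hσ2]; exact dS_eq hz)
  obtain ⟨χy, hy1, hy2⟩ := exists_angle (x := y 1) (y := y 2) hρpos (by rw [hρ2]; exact dS_eq hy)
  -- wedge conditions in angular form
  have hA : |z 0| < σ * Real.sin (χz - a) := by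
    have : σ * Real.sin (χz - a) = Real.cos a * z 1 - Real.sin a * z 2 := by
      rw [hz1, hz2, Real.sin_sub]; ring
    rw [this]; exact hza
  have hB : |z 0| < σ * Real.sin (b - χz) := by
    have : σ * Real.sin (b - χz) = Real.sin b * z 2 - Real.cos b * z 1 := by
      rw [hz1, hz2, Real.sin_sub]; ring
    rw [this]; exact hzb
  -- normalized angle u of z
  set k : ℤ := ⌊(χz - a) / (2 * Real.pi)⌋ with hkdef
  set u : ℝ := χz - a - 2 * Real.pi * k with hudef
  have hk1 : (k:ℝ) * (2 * Real.pi) ≤ χz - a := by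
    have := Int.floor_le ((χz - a) / (2 * Real.pi))
    calc (k:ℝ) * (2 * Real.pi) ≤ ((χz - a) / (2 * Real.pi)) * (2 * Real.pi) := by
          apply mul_le_mul_of_nonneg_right this h2π.le
    _ = χz - a := by field_simp
  have hk2 : χz - a < ((k:ℝ) + 1) * (2 * Real.pi) := by
    have := Int.lt_floor_add_one ((χz - a) / (2 * Real.pi))
    calc χz - a = ((χz - a) / (2 * Real.pi)) * (2 * Real.pi) := by field_simp
    _ < ((k:ℝ) + 1) * (2 * Real.pi) := by
          apply mul_lt_mul_of_pos_right this h2π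
  have hu0 : 0 ≤ u := by rw [hudef]; linarith
  have hu2 : u < 2 * Real.pi := by rw [hudef]; linarith
  have hχzu : χz - a = u + (k:ℝ) * (2 * Real.pi) := by rw [hudef]; ring
  have hsinu : Real.sin u = Real.sin (χz - a) := by
    rw [hχzu, Real.sin_add_int_mul_two_pi]
  have hsinu_pos : |z 0| / σ < Real.sin u := by
    rw [hsinu, div_lt_iff₀ hσpos]; linarith [hA]
  have hsinu_pos' : 0 < Real.sin u :=
    lt_of_le_of_lt (by positivity) hsinu_pos
  have huπ : u < Real.pi := by
    by_contra hcon
    push_neg at hcon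
    have h1 : Real.sin (u - Real.pi) = -Real.sin u := Real.sin_sub_pi u
    have h2 : 0 ≤ Real.sin (u - Real.pi) :=
      Real.sin_nonneg_of_nonneg_of_le_pi (by linarith) (by linarith)
    linarith
  have hu_pos : 0 < u := by
    rcases lt_or_eq_of_le hu0 with h | h
    · exact h
    · exfalso; rw [← h, Real.sin_zero] at hsinu_pos'; linarith
  -- the other side
  set v : ℝ := b - a - u with hvdef
  have hsinv : Real.sin v = Real.sin (b - χz) := by
    have : b - χz = v + (-k : ℤ) * (2 * Real.pi) := by rw [hvdef, hudef]; push_cast; ring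
    rw [this, Real.sin_add_int_mul_two_pi]
  have hsinv_pos : |z 0| / σ < Real.sin v := by
    rw [hsinv, div_lt_iff₀ hσpos]; linarith [hB]
  have hsinv_pos' : 0 < Real.sin v :=
    lt_of_le_of_lt (by positivity) hsinv_pos
  have hvπ : v < Real.pi := by rw [hvdef]; linarith
  have hv_pos : 0 < v := by
    by_contra hcon
    push_neg at hcon
    have hvn : -Real.pi < v := by rw [hvdef]; linarith
    have h2 : 0 ≤ Real.sin (-v) :=
      Real.sin_nonneg_of_nonneg_of_le_pi (by linarith) (by linarith)
    rw [Real.sin_neg] at h2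
    linarith
  have huv : u < b - a := by rw [hvdef] at hv_pos; linarith
  -- the angles ε and δ
  have hz0σ : |z 0| < σ := by
    nlinarith [sq_abs (z 0), abs_nonneg (z 0)]
  have hy0ρ : |y 0| < ρ := by
    nlinarith [sq_abs (y 0), abs_nonneg (y 0)]
  set ε := Real.arcsin (|z 0| / σ) with hεdef
  set δ := Real.arcsin (|y 0| / ρ) with hδdef
  have hz0σ1 : |z 0| / σ ≤ 1 := le_of_lt ((div_lt_one hσpos).mpr hz0σ)
  have hy0ρ1 : |y 0| / ρ ≤ 1 := le_of_lt ((div_lt_one hρpos).mpr hy0ρ)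
  have hsinε : Real.sin ε = |z 0| / σ := by
    apply Real.sin_arcsin ?_ hz0σ1
    have : (0:ℝ) ≤ |z 0| / σ := by positivity
    linarith
  have hsinδ : Real.sin δ = |y 0| / ρ := by
    apply Real.sin_arcsin ?_ hy0ρ1
    have : (0:ℝ) ≤ |y 0| / ρ := by positivity
    linarith
  have hcosε : Real.cos ε = r / σ := by
    rw [hεdef, Real.cos_arcsin]
    have h1 : 1 - (|z 0| / σ) ^ 2 = (r / σ) ^ 2 := by
      rw [div_pow, div_pow, sq_abs]
      field_simp
      linarith
    rw [h1, Real.sqrt_sq (by positivity)]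
  have hcosδ : Real.cos δ = r / ρ := by
    rw [hδdef, Real.cos_arcsin]
    have h1 : 1 - (|y 0| / ρ) ^ 2 = (r / ρ) ^ 2 := by
      rw [div_pow, div_pow, sq_abs]
      field_simp
      linarith
    rw [h1, Real.sqrt_sq (by positivity)]
  have hε0 : 0 ≤ ε := Real.arcsin_nonneg.mpr (by positivity)
  have hδ0 : 0 ≤ δ := Real.arcsin_nonneg.mpr (by positivity)
  have hεhalf : ε < Real.pi / 2 :=
    Real.arcsin_lt_pi_div_two.mpr ((div_lt_one hσpos).mpr hz0σ)
  have hδhalf : δ < Real.pi / 2 :=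
    Real.arcsin_lt_pi_div_two.mpr ((div_lt_one hρpos).mpr hy0ρ)
  have hεu : ε < u := by
    rcases le_or_gt u (Real.pi / 2) with h | h
    · by_contra hcon
      push_neg at hcon
      have hmono : Real.sin u ≤ Real.sin ε := by
        apply Real.strictMonoOn_sin.monotoneOn ⟨by linarith, h⟩ ⟨by linarith, by linarith [Real.arcsin_le_pi_div_two (|z 0| / σ)]⟩ hcon
      rw [hsinε] at hmono
      linarith
    · linarith
  have hεv : ε < v := by
    rcases le_or_gt v (Real.pi / 2) with h | h
    · by_contra hcon
      push_neg at hcon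
      have hmono : Real.sin v ≤ Real.sin ε := by
        apply Real.strictMonoOn_sin.monotoneOn ⟨by linarith, h⟩ ⟨by linarith, by linarith [Real.arcsin_le_pi_div_two (|z 0| / σ)]⟩ hcon
      rw [hsinε] at hmono
      linarith
    · linarith
  -- normalized angle difference w between y and z
  set m : ℤ := round ((χy - χz) / (2 * Real.pi)) with hmdef
  set w : ℝ := χy - χz - 2 * Real.pi * m with hwdef
  have hwabs : |w| ≤ Real.pi := by
    have h1 : w = 2 * Real.pi * ((χy - χz) / (2 * Real.pi) - (m:ℝ)) := by
      rw [hwdef]; field_simp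
    rw [h1, abs_mul, abs_of_pos h2π]
    calc 2 * Real.pi * |(χy - χz) / (2 * Real.pi) - (m:ℝ)| ≤ 2 * Real.pi * (1/2) := by
          apply mul_le_mul_of_nonneg_left (abs_sub_round _) h2π.le
    _ = Real.pi := by ring
  set D := |w| with hDdef
  have hD0 : 0 ≤ D := abs_nonneg w
  -- key step: D > ε + δ
  have hkey : ε + δ < D := by
    by_contra hcon
    push_neg at hcon
    rcases le_or_gt D δ with hDδ | hDδ
    · -- z's own angle already contradicts
      have hψ : a + u ∈ Set.Ioo a b := ⟨by linarith, by linarith⟩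
      have h1 := hyI (a + u) hψ
      have hval : y 1 * Real.sin (a + u) + y 2 * Real.cos (a + u) = ρ * Real.cos w := by
        have hχ : χy - (a + u) = w + ((m + k : ℤ) : ℝ) * (2 * Real.pi) := by
          rw [hwdef, hudef]; push_cast; ring
        rw [hy1, hy2]
        calc ρ * Real.sin χy * Real.sin (a + u) + ρ * Real.cos χy * Real.cos (a + u)
            = ρ * Real.cos (χy - (a + u)) := by rw [Real.cos_sub χy (a + u)]; ring
        _ = ρ * Real.cos w := by rw [hχ, Real.cos_add_int_mul_two_pi]
      have hcw : Real.cos w = Real.cos D := (Real.cos_abs w).symm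
      have hge : Real.cos δ ≤ Real.cos D :=
        Real.cos_le_cos_of_nonneg_of_le_pi hD0 (by linarith) hDδ
      have : r ≤ ρ * Real.cos w := by
        rw [hcw]
        calc r = ρ * Real.cos δ := by rw [hcosδ]; field_simp
        _ ≤ ρ * Real.cos D := mul_le_mul_of_nonneg_left hge hρpos.le
      linarith [hval ▸ h1]
    · -- shift by s toward y
      set s : ℝ := D - δ with hsdef
      have hs0 : 0 < s := by rw [hsdef]; linarith
      have hsε : s ≤ ε := by rw [hsdef]; linarith
      by_cases hw0 : 0 ≤ w
      · have hwD : w = D := (abs_of_nonneg hw0).symm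
        have hψ : a + u + s ∈ Set.Ioo a b := ⟨by linarith, by linarith⟩
        have h1 := hyI (a + u + s) hψ
        have hval : y 1 * Real.sin (a + u + s) + y 2 * Real.cos (a + u + s)
            = ρ * Real.cos (w - s) := by
          have hχ : χy - (a + u + s) = (w - s) + ((m + k : ℤ) : ℝ) * (2 * Real.pi) := by
            rw [hwdef, hudef]; push_cast; ring
          rw [hy1, hy2]
          calc ρ * Real.sin χy * Real.sin (a + u + s) + ρ * Real.cos χy * Real.cos (a + u + s)
              = ρ * Real.cos (χy - (a + u + s)) := by rw [Real.cos_sub χy (a + u + s)]; ring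
          _ = ρ * Real.cos (w - s) := by rw [hχ, Real.cos_add_int_mul_two_pi]
        have hws : w - s = δ := by rw [hwD, hsdef]; ring
        rw [hws] at hval
        have : ρ * Real.cos δ = r := by rw [hcosδ]; field_simp
        linarith [hval ▸ h1]
      · push_neg at hw0
        have hwD : w = -D := by rw [hDdef, abs_of_neg hw0]; ring
        have hψ : a + u - s ∈ Set.Ioo a b := ⟨by linarith, by linarith⟩
        have h1 := hyI (a + u - s) hψ
        have hval : y 1 * Real.sin (a + u - s) + y 2 * Real.cos (a + u - s)
            = ρ * Real.cos (w + s) := by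
          have hχ : χy - (a + u - s) = (w + s) + ((m + k : ℤ) : ℝ) * (2 * Real.pi) := by
            rw [hwdef, hudef]; push_cast; ring
          rw [hy1, hy2]
          calc ρ * Real.sin χy * Real.sin (a + u - s) + ρ * Real.cos χy * Real.cos (a + u - s)
              = ρ * Real.cos (χy - (a + u - s)) := by rw [Real.cos_sub χy (a + u - s)]; ring
          _ = ρ * Real.cos (w + s) := by rw [hχ, Real.cos_add_int_mul_two_pi]
        have hws : w + s = -δ := by rw [hwD, hsdef]; ring
        rw [hws, Real.cos_neg] at hval
        have : ρ * Real.cos δ = r := by rw [hcosδ]; field_simp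
        linarith [hval ▸ h1]
  -- conclude
  have hcosD : Real.cos (χz - χy) = Real.cos D := by
    have hχ : χz - χy = -(w + ((m : ℤ) : ℝ) * (2 * Real.pi)) := by rw [hwdef]; push_cast; ring
    rw [hχ, Real.cos_neg, Real.cos_add_int_mul_two_pi, ← Real.cos_abs]
  have hdot : z 1 * y 1 + z 2 * y 2 = σ * ρ * Real.cos (χz - χy) := by
    rw [hz1, hz2, hy1, hy2, Real.cos_sub]; ring
  have hcltD : Real.cos D < Real.cos (ε + δ) :=
    Real.cos_lt_cos_of_nonneg_of_le_pi (by linarith) hwabs hkey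
  have hcos_sum : σ * ρ * Real.cos (ε + δ) = r ^ 2 - |z 0| * |y 0| := by
    rw [Real.cos_add, hcosε, hsinε, hcosδ, hsinδ]
    field_simp
  have hlt : σ * ρ * Real.cos D < r ^ 2 - |z 0| * |y 0| := by
    calc σ * ρ * Real.cos D < σ * ρ * Real.cos (ε + δ) := by
          apply mul_lt_mul_of_pos_left hcltD (by positivity)
    _ = r ^ 2 - |z 0| * |y 0| := hcos_sum
  have h2d : z 1 * y 1 + z 2 * y 2 < r ^ 2 - |z 0| * |y 0| := by
    rw [hdot, hcosD]; exact hlt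
  have hz0y0 : -(|z 0| * |y 0|) ≤ z 0 * y 0 := by
    rw [← abs_mul]; exact neg_abs_le _
  show -r ^ 2 < z 0 * y 0 - z 1 * y 1 - z 2 * y 2
  linarith

lemma rot_mulVec (α : ℝ) (x : Fin 3 → ℝ) :
    (rot α).mulVec x = ![x 0, Real.cos α * x 1 - Real.sin α * x 2,
      Real.sin α * x 1 + Real.cos α * x 2] := by
  funext i
  fin_cases i <;>
    simp [rot, Matrix.mulVec, dotProduct, Fin.sum_univ_three] <;> ring

lemma image_rot (r α : ℝ) :
    (fun x => (rot α).mulVec x) '' wedge1 r =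
      {z | z ∈ deSitter r ∧ |z 0| < Real.cos α * z 2 - Real.sin α * z 1} := by
  have hcs : Real.sin α ^ 2 + Real.cos α ^ 2 = 1 := Real.sin_sq_add_cos_sq α
  ext z
  constructor
  · rintro ⟨x, ⟨hxdS, hxw⟩, rfl⟩
    have hx : mink x x = -r ^ 2 := hxdS
    show (rot α).mulVec x ∈ _
    rw [rot_mulVec]
    constructor
    · show mink _ _ = -r ^ 2
      unfold mink at *
      simp only [Matrix.cons_val_zero, Matrix.cons_val_one, Matrix.head_cons,
        Matrix.cons_val_two, Matrix.tail_cons]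
      linear_combination hx + (- x 1 ^ 2 - x 2 ^ 2) * hcs
    · simp only [Set.mem_setOf_eq, Matrix.cons_val_zero, Matrix.cons_val_one, Matrix.head_cons,
        Matrix.cons_val_two, Matrix.tail_cons]
      have heq : Real.cos α * (Real.sin α * x 1 + Real.cos α * x 2) -
          Real.sin α * (Real.cos α * x 1 - Real.sin α * x 2) = x 2 := by
        linear_combination (x 2) * hcs
      rw [heq]; exact hxw
  · rintro ⟨hzdS, hzw⟩
    have hz : mink z z = -r ^ 2 := hzdS
    refine ⟨![z 0, Real.cos α * z 1 + Real.sin α * z 2,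
      Real.cos α * z 2 - Real.sin α * z 1], ⟨?_, ?_⟩, ?_⟩
    · show mink _ _ = -r ^ 2
      unfold mink at *
      simp only [Matrix.cons_val_zero, Matrix.cons_val_one, Matrix.head_cons,
        Matrix.cons_val_two, Matrix.tail_cons]
      linear_combination hz + (- z 1 ^ 2 - z 2 ^ 2) * hcs
    · simp only [Set.mem_setOf_eq, Matrix.cons_val_zero, Matrix.cons_val_one, Matrix.head_cons,
        Matrix.cons_val_two, Matrix.tail_cons]
      exact hzw
    · show (rot α).mulVec _ = z
      rw [rot_mulVec]
      funext i
      fin_cases i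
      all_goals simp [Matrix.cons_val_zero, Matrix.cons_val_one, Matrix.head_cons,
        Matrix.cons_val_two, Matrix.tail_cons]
      · linear_combination (z 1) * hcs
      · linear_combination (z 2) * hcs

lemma arc_dS {r : ℝ} (ψ : ℝ) : (![0, r * Real.sin ψ, r * Real.cos ψ]) ∈ deSitter r := by
  show mink _ _ = -r ^ 2
  unfold mink
  simp only [Matrix.cons_val_zero, Matrix.cons_val_one, Matrix.head_cons,
    Matrix.cons_val_two, Matrix.tail_cons]
  linear_combination (-(r ^ 2)) * (Real.sin_sq_add_cos_sq ψ)

lemma arc_mink (r ψ : ℝ) (x : Fin 3 → ℝ) :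
    mink (![0, r * Real.sin ψ, r * Real.cos ψ]) x
      = -(r * (x 1 * Real.sin ψ + x 2 * Real.cos ψ)) := by
  unfold mink
  simp only [Matrix.cons_val_zero, Matrix.cons_val_one, Matrix.head_cons,
    Matrix.cons_val_two, Matrix.tail_cons]
  ring

/-- For `γ ∈ ℝ`, `θ ∈ (0, π/2]`, let
`I = {(0, r·sin ψ, r·cos ψ) : γ − θ < ψ < γ + θ}` be an open arc on the time-zero circle
of `dS` of length `2θr ≤ πr`. Then the causal completion of `I` is the intersection of
two wedges whose edges lie on the time-zero circle:
`I″ = R₀(θ − γ − π/2)·W₁ ∩ R₀(π/2 − γ − θ)·W₁`. -/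
theorem arc_causal_completion (r : ℝ) (hr : 0 < r) (γ θ : ℝ)
    (hθ : θ ∈ Set.Ioc 0 (Real.pi / 2)) :
    causalCompl r (causalCompl r
        {x | ∃ ψ ∈ Set.Ioo (γ - θ) (γ + θ), x = ![0, r * Real.sin ψ, r * Real.cos ψ]}) =
      ((fun x => (rot (θ - γ - Real.pi / 2)).mulVec x) '' wedge1 r) ∩
        ((fun x => (rot (Real.pi / 2 - γ - θ)).mulVec x) '' wedge1 r) := by
  obtain ⟨hθ0, hθπ⟩ := hθ
  have hπ := Real.pi_pos
  set a : ℝ := γ - θ with hadef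
  set b : ℝ := γ + θ with hbdef
  have hab : a < b := by rw [hadef, hbdef]; linarith
  have hba : b - a ≤ Real.pi := by rw [hadef, hbdef]; linarith
  set I : Set (Fin 3 → ℝ) :=
    {x | ∃ ψ ∈ Set.Ioo a b, x = ![0, r * Real.sin ψ, r * Real.cos ψ]} with hIdef
  -- identify the two image wedges
  have hAfun : ∀ v : Fin 3 → ℝ, Real.cos (θ - γ - Real.pi / 2) * v 2 -
      Real.sin (θ - γ - Real.pi / 2) * v 1 = Real.cos a * v 1 - Real.sin a * v 2 := by
    intro v
    have e1 : θ - γ - Real.pi / 2 = -(a + Real.pi / 2) := by rw [hadef]; ring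
    rw [e1, Real.cos_neg, Real.sin_neg, Real.cos_add_pi_div_two, Real.sin_add_pi_div_two]
    ring
  have hBfun : ∀ v : Fin 3 → ℝ, Real.cos (Real.pi / 2 - γ - θ) * v 2 -
      Real.sin (Real.pi / 2 - γ - θ) * v 1 = Real.sin b * v 2 - Real.cos b * v 1 := by
    intro v
    have e1 : Real.pi / 2 - γ - θ = Real.pi / 2 - b := by rw [hbdef]; ring
    rw [e1, Real.cos_pi_div_two_sub, Real.sin_pi_div_two_sub]
  have hBfun' : ∀ v : Fin 3 → ℝ, Real.cos (b + Real.pi) * v 1 -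
      Real.sin (b + Real.pi) * v 2 = Real.sin b * v 2 - Real.cos b * v 1 := by
    intro v
    rw [Real.cos_add_pi, Real.sin_add_pi]
    ring
  have hImA : ((fun x => (rot (θ - γ - Real.pi / 2)).mulVec x) '' wedge1 r) =
      {v | v ∈ deSitter r ∧ |v 0| < Real.cos a * v 1 - Real.sin a * v 2} := by
    rw [image_rot]
    ext v
    simp only [Set.mem_setOf_eq, hAfun v]
  have hImB : ((fun x => (rot (Real.pi / 2 - γ - θ)).mulVec x) '' wedge1 r) =
      {v | v ∈ deSitter r ∧ |v 0| < Real.sin b * v 2 - Real.cos b * v 1} := by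
    rw [image_rot]
    ext v
    simp only [Set.mem_setOf_eq, hBfun v]
  rw [hImA, hImB]
  -- sine positivity on the arc, seen from both edges
  have hsinA : ∀ ψ ∈ Set.Ioo a b, 0 < Real.sin (ψ - a) := by
    intro ψ hψ
    exact Real.sin_pos_of_pos_of_lt_pi (by linarith [hψ.1]) (by linarith [hψ.2])
  have hsinB : ∀ ψ ∈ Set.Ioo a b, 0 < Real.sin (ψ - (b + Real.pi)) := by
    intro ψ hψ
    have e1 : ψ - (b + Real.pi) = (ψ - b) - Real.pi := by ring
    rw [e1, Real.sin_sub_pi]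
    have e2 : -Real.sin (ψ - b) = Real.sin (b - ψ) := by
      rw [← Real.sin_neg]; ring_nf
    rw [e2]
    exact Real.sin_pos_of_pos_of_lt_pi (by linarith [hψ.2]) (by linarith [hψ.1])
  ext z
  constructor
  · rintro ⟨hzdS, hzsl⟩
    have key : ∀ α : ℝ, (∀ ψ ∈ Set.Ioo a b, 0 < Real.sin (ψ - α)) →
        |z 0| < Real.cos α * z 1 - Real.sin α * z 2 := by
      intro α hα
      by_contra hcon
      push_neg at hcon
      obtain ⟨yw, hywdS, hywm, hminkw⟩ := wedge_reverse hr hzdS hcon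
      have hyI : yw ∈ causalCompl r I := by
        refine ⟨hywdS, ?_⟩
        rintro x ⟨ψ, hψ, rfl⟩
        rw [sl_iff (arc_dS ψ) hywdS, arc_mink]
        have harc := wm_arc hr hywdS hywm (hα ψ hψ)
        nlinarith [harc]
      have h2 := hzsl yw hyI
      rw [sl_iff hywdS hzdS] at h2
      linarith
    constructor
    · exact ⟨hzdS, key a hsinA⟩
    · refine ⟨hzdS, ?_⟩
      have h := key (b + Real.pi) hsinB
      rwa [hBfun' z] at h
  · rintro ⟨⟨hzdS, hzA⟩, ⟨-, hzB⟩⟩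
    refine ⟨hzdS, ?_⟩
    rintro x ⟨hxdS, hxI⟩
    rw [sl_iff hxdS hzdS, mink_comm]
    apply main_ineq hr hab hba hzdS hxdS hzA hzB
    intro ψ hψ
    have hsl := hxI _ ⟨ψ, hψ, rfl⟩
    rw [sl_iff (arc_dS ψ) hxdS, arc_mink] at hsl
    nlinarith [hsl]
end
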